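/- arXiv:2311.07997 — 3 statements merged into one kernel-verified Lean document; each statement's English description precedes it below -/
import Mathlib

section
/- For every s ≥ 0 there exists a constant C_s > 0 such that for every δ > 0, sup over n ∈ ℤ with n ≠ 0 of ⟨n⟩^s · |n| · |coth(δn) − sgn(n)| ≤ C_s · δ^{−1} · (1 + δ^{−s}), where ⟨n⟩ = (1 + n²)^{1/2}. -/
/-- The hyperbolic cotangent `coth x = (eˣ + e⁻ˣ)/(eˣ − e⁻ˣ)`, for `x ≠ 0`. -/
noncomputable def cothR (x : ℝ) : ℝ :=
  (Real.exp x + Real.exp (-x)) / (Real.exp x - Real.exp (-x))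

lemma denom_pos {x : ℝ} (hx : 0 < x) : 0 < Real.exp x - Real.exp (-x) := by
  have := Real.exp_lt_exp.mpr (show -x < x by linarith)
  linarith

lemma cothR_sub_one_eq {x : ℝ} (hx : 0 < x) :
    cothR x - 1 = 2 * Real.exp (-x) / (Real.exp x - Real.exp (-x)) := by
  unfold cothR
  rw [div_sub_one (denom_pos hx).ne']
  ring_nf

lemma cothR_neg (x : ℝ) : cothR (-x) = -cothR x := by
  unfold cothR
  rw [neg_neg, show Real.exp (-x) - Real.exp x = -(Real.exp x - Real.exp (-x)) by ring,
    div_neg, add_comm]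

lemma cothR_sub_one_nonneg {x : ℝ} (hx : 0 < x) : 0 ≤ cothR x - 1 := by
  rw [cothR_sub_one_eq hx]
  exact div_nonneg (by positivity) (denom_pos hx).le

lemma cothR_sub_one_le {x : ℝ} (hx : 0 < x) : cothR x - 1 ≤ Real.exp (-x) / x := by
  rw [cothR_sub_one_eq hx]
  have h2 : 2 * x ≤ Real.exp x - Real.exp (-x) := by
    have h := Real.self_lt_sinh_iff.mpr hx
    rw [Real.sinh_eq] at h
    linarith
  calc 2 * Real.exp (-x) / (Real.exp x - Real.exp (-x))
      ≤ 2 * Real.exp (-x) / (2 * x) := by gcongr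
    _ = Real.exp (-x) / x := mul_div_mul_left _ _ two_ne_zero

lemma rpow_mul_exp_neg_le {s t : ℝ} (hs : 0 ≤ s) (ht : 0 < t) :
    t ^ s * Real.exp (-t) ≤ (s + 1) ^ s := by
  have h1 : (0:ℝ) < s + 1 := by linarith
  have key : t ^ s ≤ (s + 1) ^ s * Real.exp (s * (t / (s + 1))) := by
    calc t ^ s = ((s + 1) * (t / (s + 1))) ^ s := by
          rw [mul_div_cancel₀ _ h1.ne']
      _ = (s + 1) ^ s * (t / (s + 1)) ^ s := Real.mul_rpow h1.le (by positivity)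
      _ ≤ (s + 1) ^ s * (Real.exp (t / (s + 1))) ^ s := by
          gcongr
          have := Real.add_one_le_exp (t / (s + 1))
          linarith
      _ = (s + 1) ^ s * Real.exp ((t / (s + 1)) * s) := by rw [Real.exp_mul]
      _ = (s + 1) ^ s * Real.exp (s * (t / (s + 1))) := by rw [mul_comm (t / (s+1)) s]
  calc t ^ s * Real.exp (-t)
      ≤ (s + 1) ^ s * Real.exp (s * (t / (s + 1))) * Real.exp (-t) := by
        gcongr
    _ = (s + 1) ^ s * Real.exp (s * (t / (s + 1)) + -t) := by
        rw [mul_assoc, Real.exp_add]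
    _ ≤ (s + 1) ^ s * 1 := by
        gcongr
        rw [Real.exp_le_one_iff]
        have h3 : s * (t / (s + 1)) + -t = -(t / (s + 1)) := by
          field_simp
          ring
        rw [h3]
        exact neg_nonpos.mpr (by positivity)
    _ = (s + 1) ^ s := mul_one _

/-- For every `s ≥ 0` there is a constant `C_s > 0` such that for every `δ > 0` and every
nonzero integer `n`, `⟨n⟩^s · |n| · |coth(δn) − sgn(n)| ≤ C_s · δ⁻¹ · (1 + δ^{−s})`,
where `⟨n⟩ = (1 + n²)^{1/2}`. -/
theorem stmt2 (s : ℝ) (hs : 0 ≤ s) :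
    ∃ C : ℝ, 0 < C ∧ ∀ δ : ℝ, 0 < δ → ∀ n : ℤ, n ≠ 0 →
      (1 + (n : ℝ) ^ 2) ^ (s / 2) * |(n : ℝ)| * |cothR (δ * n) - Real.sign n| ≤
        C * δ⁻¹ * (1 + δ ^ (-s)) := by
  refine ⟨2 ^ (s / 2) * (s + 1) ^ s, by positivity, fun δ hδ n hn => ?_⟩
  set m : ℝ := |(n : ℝ)| with hm
  have hm1 : 1 ≤ m := by
    rw [hm]
    exact_mod_cast Int.one_le_abs (by omega)
  have hm0 : 0 < m := lt_of_lt_of_le one_pos hm1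
  have hδm : 0 < δ * m := by positivity
  have hsq : (n : ℝ) ^ 2 = m ^ 2 := (sq_abs _).symm
  have habs : |cothR (δ * n) - Real.sign n| = cothR (δ * m) - 1 := by
    rcases lt_or_gt_of_ne (show (n:ℝ) ≠ 0 by exact_mod_cast hn) with h | h
    · have hmn : m = -(n : ℝ) := abs_of_neg h
      have hd : δ * (n : ℝ) = -(δ * m) := by rw [hmn]; ring
      rw [Real.sign_of_neg h, hd, cothR_neg,
        show -cothR (δ * m) - (-1) = -(cothR (δ * m) - 1) by ring, abs_neg]
      exact abs_of_nonneg (cothR_sub_one_nonneg hδm)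
    · have hmn : m = (n : ℝ) := abs_of_pos h
      rw [Real.sign_of_pos h, hmn]
      rw [← hmn]
      exact abs_of_nonneg (cothR_sub_one_nonneg hδm)
  have hpow : (1 + m ^ 2) ^ (s / 2) ≤ 2 ^ (s / 2) * m ^ s := by
    have h2 : (1 + m ^ 2) ≤ 2 * m ^ 2 := by nlinarith
    calc (1 + m ^ 2) ^ (s / 2) ≤ (2 * m ^ 2) ^ (s / 2) := by
          gcongr
      _ = 2 ^ (s / 2) * (m ^ 2) ^ (s / 2) := Real.mul_rpow (by norm_num) (by positivity)
      _ = 2 ^ (s / 2) * m ^ s := by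
          rw [← Real.rpow_natCast m 2, ← Real.rpow_mul hm0.le]
          push_cast
          rw [show (2:ℝ) * (s / 2) = s by ring]
  have hms : m ^ s * Real.exp (-(δ * m)) ≤ δ ^ (-s) * (s + 1) ^ s := by
    have hmeq : m ^ s = δ ^ (-s) * (δ * m) ^ s := by
      rw [Real.mul_rpow hδ.le hm0.le, ← mul_assoc, ← Real.rpow_add hδ]
      norm_num
    rw [hmeq, mul_assoc]
    gcongr
    exact rpow_mul_exp_neg_le hs hδm
  rw [habs, hsq]
  calc (1 + m ^ 2) ^ (s / 2) * m * (cothR (δ * m) - 1)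
      ≤ (1 + m ^ 2) ^ (s / 2) * m * (Real.exp (-(δ * m)) / (δ * m)) := by
        gcongr
        exact cothR_sub_one_le hδm
    _ = (1 + m ^ 2) ^ (s / 2) * Real.exp (-(δ * m)) * δ⁻¹ := by
        field_simp
    _ ≤ 2 ^ (s / 2) * m ^ s * Real.exp (-(δ * m)) * δ⁻¹ := by
        gcongr
    _ = 2 ^ (s / 2) * (m ^ s * Real.exp (-(δ * m))) * δ⁻¹ := by ring
    _ ≤ 2 ^ (s / 2) * (δ ^ (-s) * (s + 1) ^ s) * δ⁻¹ := by
        gcongr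
    _ = (2 ^ (s / 2) * (s + 1) ^ s) * δ⁻¹ * δ ^ (-s) := by ring
    _ ≤ (2 ^ (s / 2) * (s + 1) ^ s) * δ⁻¹ * (1 + δ ^ (-s)) := by
        gcongr
        linarith [Real.rpow_nonneg hδ.le (-s), zero_le_one (α := ℝ)]
end

section
/- Let δ > 0 and let u : ℝ × 𝕋 → ℝ be a smooth function satisfying the intermediate long wave equation ∂_t u(t, x) = (G_δ ∂_x² u(t, ·))(x) + ∂_x(u(t, ·)²)(x) for all (t, x). Then both the mean ∫_𝕋 u(t, x) dx and the mass ∫_𝕋 u(t, x)² dx are independent of t. -/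
/-- The `n`-th Fourier coefficient of a (2π-periodic) function `f : ℝ → ℂ`:
`f̂(n) = (2π)⁻¹ ∫_0^{2π} e^{−inx} f(x) dx`. -/
noncomputable def fCoef (f : ℝ → ℂ) (n : ℤ) : ℂ :=
  (1 / (2 * (Real.pi : ℂ))) * ∫ x in (0 : ℝ)..(2 * Real.pi), Complex.exp (-Complex.I * n * x) * f x

/-- The Fourier multiplier operator with symbol `θ`, realized through the Fourier series. -/
noncomputable def mulOp (θ : ℤ → ℂ) (f : ℝ → ℂ) (x : ℝ) : ℂ :=
  ∑' n : ℤ, θ n * fCoef f n * Complex.exp (Complex.I * n * x)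

/-- Symbol `i n² coth(δn) − i n/δ` of `G_δ ∂ₓ² = T_δ ∂ₓ² − δ⁻¹ ∂ₓ` (vanishing at `n = 0`). -/
noncomputable def GdSym (δ : ℝ) (n : ℤ) : ℂ :=
  if n = 0 then 0 else Complex.I * (n : ℂ) ^ 2 * (cothR (δ * n) : ℂ) - Complex.I * (n : ℂ) / (δ : ℂ)

open MeasureTheory intervalIntegral Set Function
open scoped ContDiff

namespace ILWaux

lemma cothR_neg (x : ℝ) : cothR (-x) = - cothR x := by
  rw [cothR, cothR, neg_neg, add_comm,
    show Real.exp (-x) - Real.exp x = -(Real.exp x - Real.exp (-x)) by ring, div_neg]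

lemma cothR_pos {x : ℝ} (hx : 0 < x) : 0 < cothR x := by
  have h1 : Real.exp (-x) < Real.exp x := Real.exp_lt_exp.mpr (by linarith)
  exact div_pos (by positivity) (by linarith)

lemma cothR_anti {a b : ℝ} (ha : 0 < a) (hab : a ≤ b) : cothR b ≤ cothR a := by
  have hb : 0 < b := lt_of_lt_of_le ha hab
  have key : ∀ x : ℝ, 0 < x → cothR x = 1 + 2 / (Real.exp (2*x) - 1) := by
    intro x hx
    have h1 : Real.exp (-x) < Real.exp x := Real.exp_lt_exp.mpr (by linarith)
    have h2 : (0:ℝ) < Real.exp x - Real.exp (-x) := by linarith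
    have h3 : (0:ℝ) < Real.exp (2*x) - 1 := by
      have := Real.exp_lt_exp.mpr (show (0:ℝ) < 2*x by linarith)
      simp only [Real.exp_zero] at this; linarith
    rw [cothR]
    rw [div_eq_iff (ne_of_gt h2)]
    field_simp
    have e1 : Real.exp (2*x) = Real.exp x * Real.exp x := by
      rw [← Real.exp_add]; ring_nf
    have e2 : Real.exp x * Real.exp (-x) = 1 := by rw [← Real.exp_add]; simp
    have h4 : Real.exp x * Real.exp x - 1 ≠ 0 := by rw [← e1]; exact h3.ne'
    rw [show x * 2 = 2 * x by ring, e1, add_div' _ _ _ h4, div_mul_eq_mul_div, eq_div_iff h4]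
    linear_combination (2*Real.exp x) * e2
  rw [key a ha, key b hb]
  have h3 : ∀ x : ℝ, 0 < x → (0:ℝ) < Real.exp (2*x) - 1 := by
    intro x hx
    have := Real.exp_lt_exp.mpr (show (0:ℝ) < 2*x by linarith)
    simp only [Real.exp_zero] at this; linarith
  have : Real.exp (2*a) - 1 ≤ Real.exp (2*b) - 1 := by
    have := Real.exp_le_exp.mpr (show 2*a ≤ 2*b by linarith); linarith
  have := div_le_div_of_nonneg_left (by norm_num : (0:ℝ) ≤ 2) (h3 a ha) this
  linarith

lemma norm_GdSym_le {δ : ℝ} (hδ : 0 < δ) (n : ℤ) :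
    ‖GdSym δ n‖ ≤ (cothR δ + 1/δ) * (n:ℝ)^2 := by
  rcases eq_or_ne n 0 with rfl | hn
  · simp [GdSym]
  have h1 : (1:ℝ) ≤ |(n:ℝ)| := by
    rw [← Int.cast_abs]; exact_mod_cast Int.one_le_abs (by exact_mod_cast hn)
  have hcoth : |cothR (δ * n)| ≤ cothR δ := by
    rcases lt_or_gt_of_ne (show (n:ℝ) ≠ 0 by exact_mod_cast hn) with h | h
    · rw [show δ * (n:ℝ) = -(δ * (-(n:ℝ))) by ring, cothR_neg, abs_neg,
        abs_of_pos (cothR_pos (by nlinarith))]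
      exact cothR_anti hδ (by nlinarith [abs_of_neg h])
    · rw [abs_of_pos (cothR_pos (by positivity))]
      exact cothR_anti hδ (by nlinarith [abs_of_pos h])
  rw [GdSym, if_neg hn]
  have hb : ‖Complex.I * (n:ℂ)^2 * (cothR (δ*n) : ℂ) - Complex.I * (n:ℂ) / (δ:ℂ)‖
      ≤ ‖Complex.I * (n:ℂ)^2 * (cothR (δ*n) : ℂ)‖ + ‖Complex.I * (n:ℂ) / (δ:ℂ)‖ :=
    norm_sub_le _ _
  have e1 : ‖Complex.I * (n:ℂ)^2 * (cothR (δ*n) : ℂ)‖ = (n:ℝ)^2 * |cothR (δ*n)| := by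
    rw [norm_mul, norm_mul, Complex.norm_I, one_mul, norm_pow,
      Complex.norm_intCast, Complex.norm_real, Real.norm_eq_abs, sq_abs]
  have e2 : ‖Complex.I * (n:ℂ) / (δ:ℂ)‖ = |(n:ℝ)| / δ := by
    rw [norm_div, norm_mul, Complex.norm_I, one_mul,
      Complex.norm_intCast, Complex.norm_real, Real.norm_eq_abs, abs_of_pos hδ]
  have h2 : |(n:ℝ)| ≤ (n:ℝ)^2 := by nlinarith [abs_nonneg (n:ℝ), sq_abs (n:ℝ)]
  have h4 : (n:ℝ)^2 * |cothR (δ*n)| ≤ (n:ℝ)^2 * cothR δ :=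
    mul_le_mul_of_nonneg_left hcoth (by positivity)
  have h5 : |(n:ℝ)| / δ ≤ (n:ℝ)^2 / δ := by
    gcongr
  calc ‖Complex.I * (n:ℂ)^2 * (cothR (δ*n) : ℂ) - Complex.I * (n:ℂ) / (δ:ℂ)‖
      ≤ (n:ℝ)^2 * |cothR (δ*n)| + |(n:ℝ)| / δ := by rw [← e1, ← e2]; exact hb
    _ ≤ (n:ℝ)^2 * cothR δ + (n:ℝ)^2 / δ := by linarith
    _ = (cothR δ + 1/δ) * (n:ℝ)^2 := by ring

lemma GdSym_neg (δ : ℝ) (n : ℤ) : GdSym δ (-n) = - GdSym δ n := by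
  rcases eq_or_ne n 0 with rfl | hn
  · simp [GdSym]
  · rw [GdSym, GdSym, if_neg (neg_ne_zero.mpr hn), if_neg hn]
    push_cast
    rw [show δ * (-(n:ℝ)) = -(δ * n) by ring, cothR_neg]
    push_cast
    ring


lemma periodic_deriv {f : ℝ → ℂ} (hp : Function.Periodic f (2*Real.pi)) :
    Function.Periodic (deriv f) (2*Real.pi) := by
  intro x
  have h : (fun y => f (y + 2*Real.pi)) = f := funext hp
  rw [← deriv_comp_add_const, h]

lemma hasDerivAt_expI (n : ℤ) (x : ℝ) :
    HasDerivAt (fun y : ℝ => Complex.exp (-Complex.I * n * y))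
      (-Complex.I * n * Complex.exp (-Complex.I * n * x)) x := by
  have h : HasDerivAt (fun z : ℂ => Complex.exp (-Complex.I * n * z))
      (-Complex.I * n * Complex.exp (-Complex.I * n * x)) (x:ℂ) := by
    have := ((hasDerivAt_id (x:ℂ)).const_mul (-Complex.I * (n:ℂ))).cexp
    exact this.congr_deriv (by simp only [id_eq]; ring)
  exact h.comp_ofReal

lemma exp_neg_two_pi (n : ℤ) : Complex.exp (-Complex.I * n * ((2*Real.pi:ℝ):ℂ)) = 1 := by
  rw [show -Complex.I * (n:ℂ) * ((2*Real.pi:ℝ):ℂ)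
      = ((-n : ℤ):ℂ) * (2*(Real.pi:ℂ)*Complex.I) by push_cast; ring]
  exact Complex.exp_int_mul_two_pi_mul_I (-n)

lemma fCoef_deriv {f : ℝ → ℂ} (hf : ContDiff ℝ ∞ f) (hp : Function.Periodic f (2*Real.pi)) (n : ℤ) :
    fCoef (deriv f) n = Complex.I * n * fCoef f n := by
  have hibp := intervalIntegral.integral_mul_deriv_eq_deriv_mul
    (u := fun x : ℝ => Complex.exp (-Complex.I * n * x))
    (u' := fun x : ℝ => -Complex.I * n * Complex.exp (-Complex.I * n * x))
    (v := f) (v' := deriv f) (a := 0) (b := 2*Real.pi)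
    (fun x _ => hasDerivAt_expI n x)
    (fun x _ => (hf.differentiable (by norm_num) x).hasDerivAt)
    (Continuous.intervalIntegrable
      (continuous_const.mul (continuous_const.mul Complex.continuous_ofReal).cexp) _ _)
    ((hf.continuous_deriv (by norm_num)).intervalIntegrable _ _)
  rw [fCoef, fCoef, hibp]
  rw [exp_neg_two_pi]
  have hper : f (2*Real.pi) = f 0 := by simpa using (hp 0)
  rw [hper]
  rw [show (∫ x in (0:ℝ)..(2*Real.pi), -Complex.I * n * Complex.exp (-Complex.I*n*x) * f x)
      = -Complex.I * n * ∫ x in (0:ℝ)..(2*Real.pi), Complex.exp (-Complex.I*n*x) * f x by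
    rw [← intervalIntegral.integral_const_mul]
    congr 1
    ext x
    ring]
  simp only [Complex.ofReal_zero, mul_zero, Complex.exp_zero, one_mul]
  ring

lemma periodic_iter {f : ℝ → ℂ} (hp : Function.Periodic f (2*Real.pi)) (k : ℕ) :
    Function.Periodic (deriv^[k] f) (2*Real.pi) := by
  induction k with
  | zero => simpa
  | succ k ih => rw [Function.iterate_succ_apply']; exact periodic_deriv ih

lemma fCoef_iter {f : ℝ → ℂ} (hf : ContDiff ℝ ∞ f) (hp : Function.Periodic f (2*Real.pi))
    (n : ℤ) (k : ℕ) : fCoef (deriv^[k] f) n = (Complex.I * n)^k * fCoef f n := by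
  induction k with
  | zero => simp
  | succ k ih =>
    rw [Function.iterate_succ_apply',
      fCoef_deriv (ContDiff.iterate_deriv k hf) (periodic_iter hp k) n, ih]
    ring

lemma norm_fCoef_le {f : ℝ → ℂ} {C : ℝ} (hC : ∀ x ∈ Set.Icc (0:ℝ) (2*Real.pi), ‖f x‖ ≤ C)
    (n : ℤ) : ‖fCoef f n‖ ≤ C := by
  have hπ : (0:ℝ) < 2*Real.pi := by positivity
  have h1 : ‖∫ x in (0:ℝ)..(2*Real.pi), Complex.exp (-Complex.I*n*x) * f x‖
      ≤ C * |2*Real.pi - 0| := by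
    apply intervalIntegral.norm_integral_le_of_norm_le_const
    intro x hx
    rw [Set.uIoc_of_le hπ.le] at hx
    have he : ‖Complex.exp (-Complex.I*n*x)‖ = 1 := by
      rw [show -Complex.I*(n:ℂ)*(x:ℝ) = (((-(n:ℝ))*x : ℝ):ℂ) * Complex.I by push_cast; ring,
        Complex.norm_exp_ofReal_mul_I]
    rw [norm_mul, he, one_mul]
    exact hC x ⟨hx.1.le, hx.2⟩
  have hnrm : ‖(1 / (2*(Real.pi:ℂ)))‖ = 1/(2*Real.pi) := by
    rw [show (2*(Real.pi:ℂ)) = ((2*Real.pi:ℝ):ℂ) by push_cast; ring,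
      norm_div, norm_one, Complex.norm_real, Real.norm_eq_abs, abs_of_pos hπ]
  rw [fCoef, norm_mul, hnrm]
  calc 1/(2*Real.pi) * ‖∫ x in (0:ℝ)..(2*Real.pi), Complex.exp (-Complex.I*n*x) * f x‖
      ≤ 1/(2*Real.pi) * (C * |2*Real.pi - 0|) :=
        mul_le_mul_of_nonneg_left h1 (by positivity)
    _ = C := by rw [sub_zero, abs_of_pos hπ]; field_simp

lemma exists_bound (f : ℝ → ℂ) (hf : Continuous f) :
    ∃ C, 0 ≤ C ∧ ∀ x ∈ Set.Icc (0:ℝ) (2*Real.pi), ‖f x‖ ≤ C := by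
  obtain ⟨C, hC⟩ := (isCompact_Icc (a := (0:ℝ)) (b := 2*Real.pi)).exists_bound_of_continuousOn
    hf.continuousOn
  exact ⟨C, le_trans (norm_nonneg (f 0)) (hC 0 ⟨le_refl 0, by positivity⟩), hC⟩

lemma fCoef_decay {f : ℝ → ℂ} (hf : ContDiff ℝ ∞ f) (hp : Function.Periodic f (2*Real.pi)) :
    ∃ C, 0 ≤ C ∧ (∀ n, ‖fCoef f n‖ ≤ C) ∧
      ∀ n : ℤ, n ≠ 0 → ‖fCoef f n‖ ≤ C / (n:ℝ)^4 := by
  obtain ⟨C₀, hC₀0, hC₀⟩ := exists_bound f hf.continuous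
  obtain ⟨C₄, hC₄0, hC₄⟩ := exists_bound (deriv^[4] f) (ContDiff.iterate_deriv 4 hf).continuous
  refine ⟨max C₀ C₄, le_max_of_le_left hC₀0,
    fun n => le_trans (norm_fCoef_le hC₀ n) (le_max_left _ _), fun n hn => ?_⟩
  have hnR : ((n:ℝ)) ≠ 0 := by exact_mod_cast hn
  have key : fCoef (deriv^[4] f) n = (n:ℂ)^4 * fCoef f n := by
    rw [fCoef_iter hf hp n 4, mul_pow, Complex.I_pow_four, one_mul]
  have hkey : fCoef f n = fCoef (deriv^[4] f) n / (n:ℂ)^4 := by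
    rw [key, mul_div_cancel_left₀]
    exact pow_ne_zero 4 (by exact_mod_cast hn)
  have hn4 : ‖((n:ℂ))^4‖ = (n:ℝ)^4 := by
    rw [norm_pow, Complex.norm_intCast, ← abs_pow,
      abs_of_nonneg (by positivity)]
  rw [hkey, norm_div, hn4]
  have h4 : (0:ℝ) < (n:ℝ)^4 := by positivity
  gcongr
  exact le_trans (norm_fCoef_le hC₄ n) (le_max_right _ _)

set_option maxHeartbeats 1000000 in
lemma summable_norm_c {δ : ℝ} (hδ : 0 < δ) {f : ℝ → ℂ} (hf : ContDiff ℝ ∞ f)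
    (hp : Function.Periodic f (2*Real.pi)) :
    Summable (fun n : ℤ => ‖GdSym δ n * fCoef f n‖) := by
  obtain ⟨C, hC0, hCb, hCd⟩ := fCoef_decay hf hp
  have hco : (0:ℝ) ≤ cothR δ + 1/δ := by
    have := cothR_pos hδ
    positivity
  refine Summable.of_nonneg_of_le (fun n => norm_nonneg _) (fun n => ?_)
    (((Real.summable_one_div_int_pow (p := 2)).mpr (by norm_num)).mul_left ((cothR δ + 1/δ) * C))
  rcases eq_or_ne n 0 with rfl | hn
  · simp [GdSym]
  · have hnR : ((n:ℝ)) ≠ 0 := by exact_mod_cast hn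
    calc ‖GdSym δ n * fCoef f n‖ = ‖GdSym δ n‖ * ‖fCoef f n‖ := norm_mul _ _
      _ ≤ ((cothR δ + 1/δ) * (n:ℝ)^2) * (C / (n:ℝ)^4) :=
        mul_le_mul (norm_GdSym_le hδ n) (hCd n hn) (norm_nonneg _) (by positivity)
      _ = ((cothR δ + 1/δ) * C) * (1/(n:ℝ)^2) := by field_simp

lemma exp_I_cont (n : ℤ) : Continuous fun x : ℝ => Complex.exp (Complex.I * n * x) :=
  (continuous_const.mul Complex.continuous_ofReal).cexp

lemma norm_exp_I (n : ℤ) (x : ℝ) : ‖Complex.exp (Complex.I * n * x)‖ = 1 := by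
  rw [show Complex.I*(n:ℂ)*(x:ℝ) = ((((n:ℝ))*x : ℝ):ℂ) * Complex.I by push_cast; ring,
    Complex.norm_exp_ofReal_mul_I]

lemma continuous_series (c : ℤ → ℂ) (hc : Summable fun n => ‖c n‖) :
    Continuous fun x : ℝ => ∑' n : ℤ, c n * Complex.exp (Complex.I * n * x) := by
  apply continuous_tsum (fun n => continuous_const.mul (exp_I_cont n)) hc
  intro n x
  rw [Pi.mul_apply, norm_mul, norm_exp_I, mul_one]

lemma integral_swap_mul (c : ℤ → ℂ) (hc : Summable fun n => ‖c n‖) (g : ℝ → ℂ)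
    (hg : Continuous g) :
    ∫ x in (0:ℝ)..(2*Real.pi), (∑' n : ℤ, c n * Complex.exp (Complex.I * n * x)) * g x
      = ∑' n : ℤ, c n * ∫ x in (0:ℝ)..(2*Real.pi), Complex.exp (Complex.I * n * x) * g x := by
  have hπ : (0:ℝ) ≤ 2*Real.pi := by positivity
  have hFc : ∀ n : ℤ, Continuous fun x : ℝ => c n * (Complex.exp (Complex.I*n*x) * g x) :=
    fun n => continuous_const.mul ((exp_I_cont n).mul hg)
  have hint : ∀ n : ℤ, Integrable (fun x : ℝ => c n * (Complex.exp (Complex.I*n*x) * g x))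
      (MeasureTheory.volume.restrict (Set.Ioc (0:ℝ) (2*Real.pi))) :=
    fun n => ((hFc n).intervalIntegrable 0 (2*Real.pi)).1
  have hsum : Summable fun n : ℤ =>
      ∫ x in Set.Ioc (0:ℝ) (2*Real.pi), ‖c n * (Complex.exp (Complex.I*n*x) * g x)‖ := by
    have heq : ∀ n : ℤ,
        (∫ x in Set.Ioc (0:ℝ) (2*Real.pi), ‖c n * (Complex.exp (Complex.I*n*x) * g x)‖)
        = ‖c n‖ * ∫ x in Set.Ioc (0:ℝ) (2*Real.pi), ‖g x‖ := by
      intro n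
      rw [← MeasureTheory.integral_const_mul]
      congr 1
      ext x
      rw [norm_mul, norm_mul, norm_exp_I, one_mul]
    exact Summable.congr (hc.mul_right (∫ x in Set.Ioc (0:ℝ) (2*Real.pi), ‖g x‖))
      (fun n => (heq n).symm)
  have h1 : ∀ x : ℝ, (∑' n : ℤ, c n * Complex.exp (Complex.I*n*x)) * g x
      = ∑' n : ℤ, c n * (Complex.exp (Complex.I*n*x) * g x) := by
    intro x
    rw [← tsum_mul_right]
    exact tsum_congr fun n => by ring
  rw [intervalIntegral.integral_of_le hπ]
  simp_rw [h1]
  rw [← MeasureTheory.integral_tsum_of_summable_integral_norm hint hsum]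
  refine tsum_congr fun n => ?_
  rw [MeasureTheory.integral_const_mul, intervalIntegral.integral_of_le hπ]

lemma exp_I_two_pi (n : ℤ) : Complex.exp (Complex.I * n * ((2*Real.pi:ℝ):ℂ)) = 1 := by
  rw [show Complex.I * (n:ℂ) * ((2*Real.pi:ℝ):ℂ)
      = ((n : ℤ):ℂ) * (2*(Real.pi:ℂ)*Complex.I) by push_cast; ring]
  exact Complex.exp_int_mul_two_pi_mul_I n

lemma integral_exp_I {n : ℤ} (hn : n ≠ 0) :
    ∫ x in (0:ℝ)..(2*Real.pi), Complex.exp (Complex.I * n * x) = 0 := by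
  have hcn : Complex.I * (n:ℂ) ≠ 0 :=
    mul_ne_zero Complex.I_ne_zero (by exact_mod_cast hn)
  rw [integral_exp_mul_complex hcn, exp_I_two_pi]
  simp

lemma two_pi_C_ne : (2*(Real.pi:ℂ)) ≠ 0 := by
  refine mul_ne_zero two_ne_zero ?_
  exact_mod_cast Real.pi_ne_zero

lemma integral_exp_mul_eq (f : ℝ → ℂ) (n : ℤ) :
    ∫ x in (0:ℝ)..(2*Real.pi), Complex.exp (Complex.I * n * x) * f x
      = (2*(Real.pi:ℂ)) * fCoef f (-n) := by
  rw [fCoef, show ((-n : ℤ):ℂ) = -(n:ℂ) by push_cast; ring, ← mul_assoc,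
    show (2*(Real.pi:ℂ)) * (1/(2*(Real.pi:ℂ))) = 1 from
      by rw [mul_one_div, div_self two_pi_C_ne], one_mul]
  congr 1
  funext x
  congr 2
  ring

lemma tsum_odd {g : ℤ → ℂ} (hg : Summable g) (h : ∀ n, g (-n) = - g n) :
    ∑' n : ℤ, g n = 0 := by
  have h1 := (Equiv.neg ℤ).tsum_eq g
  simp only [Equiv.neg_apply] at h1
  have h2 : ∑' n : ℤ, g (-n) = ∑' n : ℤ, -(g n) := tsum_congr fun n => h n
  rw [h2, tsum_neg] at h1
  have h3 : ∑' n : ℤ, g n + ∑' n : ℤ, g n = 0 := by linear_combination -h1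
  simpa using add_self_eq_zero.mp h3

lemma integral_mulOp_eq_zero {δ : ℝ} (hδ : 0 < δ) {f : ℝ → ℂ} (hf : ContDiff ℝ ∞ f)
    (hp : Function.Periodic f (2*Real.pi)) :
    (∫ x in (0:ℝ)..(2*Real.pi), mulOp (GdSym δ) f x) = 0 := by
  have hc := summable_norm_c hδ hf hp
  have h1 := integral_swap_mul _ hc (fun _ => (1:ℂ)) continuous_const
  simp only [mul_one] at h1
  have h2 : (∫ x in (0:ℝ)..(2*Real.pi), mulOp (GdSym δ) f x)
      = ∫ x in (0:ℝ)..(2*Real.pi),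
          ∑' n : ℤ, (GdSym δ n * fCoef f n) * Complex.exp (Complex.I*n*x) :=
    intervalIntegral.integral_congr (fun x _ => by simp only [mulOp])
  rw [h2, h1]
  have h3 : ∀ n : ℤ, (GdSym δ n * fCoef f n)
      * (∫ x in (0:ℝ)..(2*Real.pi), Complex.exp (Complex.I*n*x)) = 0 := by
    intro n
    rcases eq_or_ne n 0 with rfl | hn
    · simp [GdSym]
    · rw [integral_exp_I hn, mul_zero]
  rw [tsum_congr h3, tsum_zero]

lemma integral_mulOp_mul_eq_zero {δ : ℝ} (hδ : 0 < δ) {f : ℝ → ℂ} (hf : ContDiff ℝ ∞ f)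
    (hp : Function.Periodic f (2*Real.pi)) :
    (∫ x in (0:ℝ)..(2*Real.pi), mulOp (GdSym δ) f x * f x) = 0 := by
  have hc := summable_norm_c hδ hf hp
  have h1 := integral_swap_mul _ hc f hf.continuous
  have h2 : (∫ x in (0:ℝ)..(2*Real.pi), mulOp (GdSym δ) f x * f x)
      = ∫ x in (0:ℝ)..(2*Real.pi),
          (∑' n : ℤ, (GdSym δ n * fCoef f n) * Complex.exp (Complex.I*n*x)) * f x :=
    intervalIntegral.integral_congr (fun x _ => by simp only [mulOp])
  rw [h2, h1]
  have h3 : ∀ n : ℤ, (GdSym δ n * fCoef f n)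
        * (∫ x in (0:ℝ)..(2*Real.pi), Complex.exp (Complex.I*n*x) * f x)
      = (2*(Real.pi:ℂ)) * (GdSym δ n * (fCoef f n * fCoef f (-n))) := by
    intro n
    rw [integral_exp_mul_eq]
    ring
  rw [tsum_congr h3, tsum_mul_left]
  have hodd : ∑' n : ℤ, GdSym δ n * (fCoef f n * fCoef f (-n)) = 0 := by
    apply tsum_odd
    · obtain ⟨C, hC0, hCb, hCd⟩ := fCoef_decay hf hp
      apply Summable.of_norm_bounded (g := fun n => ‖GdSym δ n * fCoef f n‖ * C) (hc.mul_right C)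
      intro n
      rw [← mul_assoc, norm_mul]
      exact mul_le_mul_of_nonneg_left (hCb (-n)) (norm_nonneg _)
    · intro n
      rw [GdSym_neg, neg_neg]
      ring
  rw [hodd, mul_zero]

lemma hasDerivAt_partial {v : ℝ → ℝ → ℝ} (hv : ContDiff ℝ (⊤ : ℕ∞) (Function.uncurry v))
    (t x : ℝ) :
    HasDerivAt (fun s => v s x)
      (fderiv ℝ (Function.uncurry v) (t,x) (1,0)) t := by
  have h1 : HasFDerivAt (Function.uncurry v) (fderiv ℝ (Function.uncurry v) (t,x)) (t,x) :=
    (hv.differentiable (by simp) (t,x)).hasFDerivAt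
  have h2 : HasDerivAt (fun s : ℝ => (s, x)) ((1:ℝ), (0:ℝ)) t :=
    (hasDerivAt_id t).prodMk (hasDerivAt_const t x)
  exact h1.comp_hasDerivAt t h2

lemma hasDerivAt_integral {v : ℝ → ℝ → ℝ} (hv : ContDiff ℝ (⊤ : ℕ∞) (Function.uncurry v)) (t₀ : ℝ) :
    HasDerivAt (fun t => ∫ x in (0:ℝ)..(2*Real.pi), v t x)
      (∫ x in (0:ℝ)..(2*Real.pi), deriv (fun s => v s x) t₀) t₀ := by
  have hπ : (0:ℝ) ≤ 2*Real.pi := by positivity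
  have hDc : Continuous fun p : ℝ × ℝ => fderiv ℝ (Function.uncurry v) p (1,0) :=
    (hv.continuous_fderiv (by simp)).clm_apply continuous_const
  obtain ⟨M, hM⟩ := (IsCompact.prod (isCompact_Icc (a := t₀-1) (b := t₀+1))
    (isCompact_Icc (a := (0:ℝ)) (b := 2*Real.pi))).exists_bound_of_continuousOn
    hDc.continuousOn
  have hvc : ∀ t : ℝ, Continuous (v t) := fun t =>
    hv.continuous.comp (continuous_const.prodMk continuous_id)
  have key := intervalIntegral.hasDerivAt_integral_of_dominated_loc_of_deriv_le
    (F := fun t x => v t x)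
    (F' := fun t x => fderiv ℝ (Function.uncurry v) (t,x) (1,0)) (x₀ := t₀)
    (a := 0) (b := 2*Real.pi) (bound := fun _ => M) (s := Metric.ball t₀ 1) (Metric.ball_mem_nhds _ one_pos)
    (Filter.Eventually.of_forall fun t => ((hvc t).aestronglyMeasurable))
    ((hvc t₀).intervalIntegrable _ _)
    ((hDc.comp (continuous_const.prodMk continuous_id)).aestronglyMeasurable)
    (Filter.Eventually.of_forall fun x hx t ht => by
      apply hM (t, x)
      constructor
      · rw [Real.ball_eq_Ioo] at ht
        exact ⟨ht.1.le, ht.2.le⟩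
      · rw [Set.uIoc_of_le hπ] at hx
        exact ⟨hx.1.le, hx.2⟩)
    (intervalIntegrable_const (μ := MeasureTheory.volume))
    (Filter.Eventually.of_forall fun x hx t ht => hasDerivAt_partial hv t x)
  have h2 := key.2
  have h3 : ∀ x : ℝ, deriv (fun s => v s x) t₀
      = fderiv ℝ (Function.uncurry v) (t₀,x) (1,0) :=
    fun x => (hasDerivAt_partial hv t₀ x).deriv
  simpa only [h3] using h2

end ILWaux

open ILWaux

/-- If a smooth spatially `2π`-periodic `u : ℝ × 𝕋 → ℝ` solves the ILW equation
`∂ₜ u = G_δ ∂ₓ² u + ∂ₓ(u²)`, then the mean `∫_𝕋 u dx` and the mass `∫_𝕋 u² dx`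
are conserved in time. -/
theorem stmt10 (δ : ℝ) (hδ : 0 < δ) (u : ℝ → ℝ → ℝ)
    (hu : ContDiff ℝ (⊤ : ℕ∞) (Function.uncurry u))
    (huper : ∀ t, Function.Periodic (u t) (2 * Real.pi))
    (heq : ∀ t x : ℝ, (deriv (fun s => u s x) t : ℂ) =
      mulOp (GdSym δ) (fun y => (u t y : ℂ)) x + (deriv (fun y => (u t y) ^ 2) x : ℂ)) :
    ∀ t₁ t₂ : ℝ,
      (∫ x in (0 : ℝ)..(2 * Real.pi), u t₁ x) = (∫ x in (0 : ℝ)..(2 * Real.pi), u t₂ x) ∧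
      (∫ x in (0 : ℝ)..(2 * Real.pi), (u t₁ x) ^ 2) =
        (∫ x in (0 : ℝ)..(2 * Real.pi), (u t₂ x) ^ 2) := by
  have huInf : ContDiff ℝ ∞ (Function.uncurry u) := hu.of_le (by simp)
  have hut : ∀ t, ContDiff ℝ ∞ (u t) := fun t =>
    huInf.comp (contDiff_const.prodMk contDiff_id)
  have hfc : ∀ t, ContDiff ℝ ∞ (fun y => ((u t y : ℝ) : ℂ)) := fun t =>
    Complex.ofRealCLM.contDiff.comp (hut t)
  have hfper : ∀ t, Function.Periodic (fun y => ((u t y : ℝ) : ℂ)) (2*Real.pi) := fun t x => by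
    simp [huper t x]
  have hAc : ∀ t, Continuous (mulOp (GdSym δ) (fun y => ((u t y : ℝ) : ℂ))) := fun t =>
    continuous_series _ (summable_norm_c hδ (hfc t) (hfper t))
  have hutd : ∀ t x, HasDerivAt (u t) (deriv (u t) x) x := fun t x =>
    (((hut t).differentiable (by norm_num)) x).hasDerivAt
  have hBc : ∀ t, Continuous (deriv (fun y => (u t y) ^ 2)) := fun t =>
    ((hut t).pow 2).continuous_deriv (by norm_num)
  have hd2 : ∀ t x, deriv (fun y => (u t y) ^ 2) x = 2 * u t x * deriv (u t) x := by
    intro t x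
    rw [((hutd t x).fun_pow 2).deriv]
    push_cast
    ring
  have hcast1 : ∀ t x, deriv (fun s => ((u s x : ℝ):ℂ)) t = ((deriv (fun s => u s x) t : ℝ):ℂ) := by
    intro t x
    have h := hasDerivAt_partial hu t x
    rw [h.ofReal_comp.deriv, h.deriv]
  have hcast2 : ∀ t x, deriv (fun y => ((u t y : ℝ):ℂ) ^ 2) x
      = ((deriv (fun y => (u t y) ^ 2) x : ℝ):ℂ) := by
    intro t x
    have h : HasDerivAt (fun y => (u t y) ^ 2) (deriv (fun y => (u t y) ^ 2) x) x :=
      ((((hut t).pow 2).differentiable (by norm_num)) x).hasDerivAt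
    have h2 := h.ofReal_comp
    push_cast at h2
    rw [h2.deriv]
  have heq' : ∀ t x, ((deriv (fun s => u s x) t : ℝ):ℂ)
      = mulOp (GdSym δ) (fun y => ((u t y : ℝ):ℂ)) x
        + ((deriv (fun y => (u t y) ^ 2) x : ℝ):ℂ) := by
    intro t x
    rw [← hcast1 t x, ← hcast2 t x]
    exact heq t x
  intro t₁ t₂
  constructor
  -- MEAN
  · have hmean : ∀ t, HasDerivAt (fun s => ∫ x in (0:ℝ)..(2*Real.pi), u s x) 0 t := by
      intro t
      have h1 := hasDerivAt_integral hu t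
      have h2 : (∫ x in (0:ℝ)..(2*Real.pi), deriv (fun s => u s x) t) = 0 := by
        have h3 : ((∫ x in (0:ℝ)..(2*Real.pi), deriv (fun s => u s x) t : ℝ) : ℂ)
            = ∫ x in (0:ℝ)..(2*Real.pi), ((deriv (fun s => u s x) t : ℝ) : ℂ) :=
          (RCLike.intervalIntegral_ofReal).symm
        have h4 : (∫ x in (0:ℝ)..(2*Real.pi), ((deriv (fun s => u s x) t : ℝ):ℂ))
            = ∫ x in (0:ℝ)..(2*Real.pi),
              (mulOp (GdSym δ) (fun y => ((u t y : ℝ):ℂ)) x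
                + ((deriv (fun y => (u t y) ^ 2) x : ℝ):ℂ)) :=
          intervalIntegral.integral_congr (fun x _ => heq' t x)
        have hBint : IntervalIntegrable (fun x => ((deriv (fun y => (u t y) ^ 2) x : ℝ):ℂ))
            MeasureTheory.volume 0 (2*Real.pi) :=
          (Complex.continuous_ofReal.comp (hBc t)).intervalIntegrable _ _
        rw [intervalIntegral.integral_add ((hAc t).intervalIntegrable _ _) hBint] at h4
        rw [integral_mulOp_eq_zero hδ (hfc t) (hfper t), zero_add] at h4
        have h6 : (∫ x in (0:ℝ)..(2*Real.pi), deriv (fun y => (u t y) ^ 2) x) = 0 := by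
          rw [intervalIntegral.integral_deriv_eq_sub
            (fun x _ => (((hut t).pow 2).differentiable (by norm_num)).differentiableAt)
            ((hBc t).intervalIntegrable _ _)]
          have hp := huper t 0
          rw [zero_add] at hp
          rw [hp]
          ring
        have h5 : (∫ x in (0:ℝ)..(2*Real.pi), ((deriv (fun y => (u t y) ^ 2) x : ℝ):ℂ))
            = ((∫ x in (0:ℝ)..(2*Real.pi), deriv (fun y => (u t y) ^ 2) x : ℝ) : ℂ) :=
          RCLike.intervalIntegral_ofReal
        rw [h6] at h5
        simp only [Complex.ofReal_zero] at h5
        rw [h5] at h4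
        rw [h4] at h3
        exact_mod_cast h3
      simpa only [h2] using h1
    exact is_const_of_deriv_eq_zero (fun t => (hmean t).differentiableAt)
      (fun t => (hmean t).deriv) t₁ t₂
  -- MASS
  · have hv : ContDiff ℝ (⊤ : ℕ∞) (Function.uncurry (fun t x => u t x ^ 2)) := hu.pow 2
    have hmass : ∀ t, HasDerivAt (fun s => ∫ x in (0:ℝ)..(2*Real.pi), u s x ^ 2) 0 t := by
      intro t
      have h1 := hasDerivAt_integral hv t
      have hpt : ∀ x : ℝ, deriv (fun s => u s x ^ 2) t
          = 2 * u t x * deriv (fun s => u s x) t := by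
        intro x
        rw [((hasDerivAt_partial hu t x).fun_pow 2).deriv, (hasDerivAt_partial hu t x).deriv]
        push_cast
        ring
      have h2 : (∫ x in (0:ℝ)..(2*Real.pi), deriv (fun s => u s x ^ 2) t) = 0 := by
        have h3 : ((∫ x in (0:ℝ)..(2*Real.pi), deriv (fun s => u s x ^ 2) t : ℝ) : ℂ)
            = ∫ x in (0:ℝ)..(2*Real.pi), ((deriv (fun s => u s x ^ 2) t : ℝ) : ℂ) :=
          (RCLike.intervalIntegral_ofReal).symm
        have h4 : (∫ x in (0:ℝ)..(2*Real.pi), ((deriv (fun s => u s x ^ 2) t : ℝ):ℂ))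
            = ∫ x in (0:ℝ)..(2*Real.pi),
              (2 * (mulOp (GdSym δ) (fun y => ((u t y : ℝ):ℂ)) x * ((u t x : ℝ):ℂ))
                + ((2 * u t x * deriv (fun y => (u t y) ^ 2) x : ℝ):ℂ)) := by
          apply intervalIntegral.integral_congr
          intro x _
          show ((deriv (fun s => u s x ^ 2) t : ℝ):ℂ)
            = 2 * (mulOp (GdSym δ) (fun y => ((u t y : ℝ):ℂ)) x * ((u t x : ℝ):ℂ))
              + ((2 * u t x * deriv (fun y => (u t y) ^ 2) x : ℝ):ℂ)
          rw [hpt x]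
          push_cast
          rw [show ((deriv (fun s => u s x) t : ℝ):ℂ) = _ from heq' t x]
          ring
        have hAint : IntervalIntegrable
            (fun x => 2 * (mulOp (GdSym δ) (fun y => ((u t y : ℝ):ℂ)) x * ((u t x : ℝ):ℂ)))
            MeasureTheory.volume 0 (2*Real.pi) :=
          (continuous_const.mul
            ((hAc t).mul (Complex.continuous_ofReal.comp ((hut t).continuous)))).intervalIntegrable _ _
        have hBint : IntervalIntegrable
            (fun x => ((2 * u t x * deriv (fun y => (u t y) ^ 2) x : ℝ):ℂ))
            MeasureTheory.volume 0 (2*Real.pi) :=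
          (Complex.continuous_ofReal.comp
            ((continuous_const.mul ((hut t).continuous)).mul (hBc t))).intervalIntegrable _ _
        rw [intervalIntegral.integral_add hAint hBint] at h4
        rw [intervalIntegral.integral_const_mul,
          integral_mulOp_mul_eq_zero hδ (hfc t) (hfper t), mul_zero, zero_add] at h4
        have h6 : (∫ x in (0:ℝ)..(2*Real.pi), 2 * u t x * deriv (fun y => (u t y) ^ 2) x) = 0 := by
          have hftc := intervalIntegral.integral_eq_sub_of_hasDerivAt
            (f := fun y => (4/3 : ℝ) * u t y ^ 3)
            (f' := fun x => 2 * u t x * deriv (fun y => (u t y) ^ 2) x)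
            (a := 0) (b := 2*Real.pi)
            (fun x _ => by
              have h := ((hutd t x).fun_pow 3).const_mul (4/3 : ℝ)
              refine h.congr_deriv ?_
              symm
              show 2 * u t x * deriv (fun y => u t y ^ 2) x = _
              rw [hd2 t x]
              push_cast
              ring)
            ((((continuous_const.mul ((hut t).continuous)).mul (hBc t))).intervalIntegrable _ _)
          rw [hftc]
          show (4/3:ℝ) * u t (2*Real.pi) ^ 3 - (4/3:ℝ) * u t 0 ^ 3 = 0
          have hp := huper t 0
          rw [zero_add] at hp
          rw [hp]
          ring
        have h5 : (∫ x in (0:ℝ)..(2*Real.pi),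
            ((2 * u t x * deriv (fun y => (u t y) ^ 2) x : ℝ):ℂ))
            = ((∫ x in (0:ℝ)..(2*Real.pi), 2 * u t x * deriv (fun y => (u t y) ^ 2) x : ℝ) : ℂ) :=
          RCLike.intervalIntegral_ofReal
        rw [h6] at h5
        simp only [Complex.ofReal_zero] at h5
        rw [h5] at h4
        rw [h4] at h3
        exact_mod_cast h3
      simpa only [h2] using h1
    exact is_const_of_deriv_eq_zero (fun t => (hmass t).differentiableAt)
      (fun t => (hmass t).deriv) t₁ t₂
end

section
/- Let δ > 0 and let u : ℝ × 𝕋 → ℝ be a smooth function satisfying the intermediate long wave equation ∂_t u(t, x) = (G_δ ∂_x² u(t, ·))(x) + ∂_x(u(t, ·)²)(x) for all (t, x). Then the Hamiltonian E_δ(u(t, ·)) = (1/2) ∫_𝕋 u(t, x) · (G_δ ∂_x u(t, ·))(x) dx + (1/3) ∫_𝕋 u(t, x)³ dx is independent of t. -/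
/-- Symbol `n coth(δn) − 1/δ` of `G_δ ∂ₓ` (vanishing at `n = 0`). -/
noncomputable def Gd1Sym (δ : ℝ) (n : ℤ) : ℂ :=
  if n = 0 then 0 else (((n : ℝ) * cothR (δ * n) - 1 / δ : ℝ) : ℂ)

namespace ILW

open MeasureTheory intervalIntegral Set Metric
open scoped ENNReal NNReal

/-! ### Basic exponential facts -/

lemma norm_exp_I_mul_real (r : ℝ) : ‖Complex.exp (Complex.I * r)‖ = 1 := by
  rw [Complex.norm_exp]
  simp [Complex.mul_re]

lemma exp_I_int_eq (n : ℤ) (x : ℝ) :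
    Complex.exp (Complex.I * n * x) = Complex.exp (Complex.I * ((n * x : ℝ) : ℂ)) := by
  push_cast; ring_nf

lemma norm_exp_I_int (n : ℤ) (x : ℝ) : ‖Complex.exp (Complex.I * n * x)‖ = 1 := by
  rw [exp_I_int_eq]; exact norm_exp_I_mul_real _

lemma norm_exp_neg_I_int (n : ℤ) (x : ℝ) : ‖Complex.exp (-Complex.I * n * x)‖ = 1 := by
  have : -Complex.I * n * x = Complex.I * ((-n : ℤ) : ℂ) * x := by push_cast; ring
  rw [this]; exact norm_exp_I_int _ _

lemma exp_I_int_two_pi (n : ℤ) : Complex.exp (Complex.I * n * ((2 * Real.pi : ℝ) : ℂ)) = 1 := by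
  have : Complex.I * n * ((2 * Real.pi : ℝ) : ℂ) = n * (2 * Real.pi * Complex.I) := by
    push_cast; ring
  rw [this, Complex.exp_int_mul_two_pi_mul_I]

lemma exp_I_int_periodic (n : ℤ) (x : ℝ) :
    Complex.exp (Complex.I * n * ((x + 2 * Real.pi : ℝ) : ℂ)) = Complex.exp (Complex.I * n * x) := by
  have : Complex.I * n * ((x + 2 * Real.pi : ℝ) : ℂ)
      = Complex.I * n * x + Complex.I * n * ((2 * Real.pi : ℝ) : ℂ) := by push_cast; ring
  rw [this, Complex.exp_add, exp_I_int_two_pi, mul_one]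

lemma hasDerivAt_cexp_real (c : ℂ) (x : ℝ) :
    HasDerivAt (fun y : ℝ => Complex.exp (c * y)) (c * Complex.exp (c * x)) x := by
  have h1 : HasDerivAt (fun y : ℝ => c * (y : ℂ)) c x := by
    simpa only [mul_one, id_eq] using ((hasDerivAt_id (x : ℂ)).const_mul c).comp_ofReal
  simpa [mul_comm, Function.comp_def] using (Complex.hasDerivAt_exp (c * x)).comp x h1

/-- Orthogonality: `∫_0^{2π} e^{imx} dx = 2π δ_{m0}`. -/
lemma integral_exp_I_int (m : ℤ) :
    (∫ x in (0:ℝ)..(2 * Real.pi), Complex.exp (Complex.I * m * x))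
      = if m = 0 then ((2 * Real.pi : ℝ) : ℂ) else 0 := by
  rcases eq_or_ne m 0 with rfl | hm
  · simp
  · have hc : (Complex.I * m : ℂ) ≠ 0 := by
      simp [Complex.I_ne_zero, Complex.ext_iff, hm]
    have : (∫ x in (0:ℝ)..(2 * Real.pi), Complex.exp (Complex.I * m * x))
        = ∫ x in (0:ℝ)..(2 * Real.pi), Complex.exp ((Complex.I * m) * x) := by
      simp [mul_assoc]
    rw [this, integral_exp_mul_complex hc, if_neg hm]
    rw [show (Complex.I * m) * ((2 * Real.pi : ℝ) : ℂ) = Complex.I * m * ((2 * Real.pi : ℝ) : ℂ) by ring]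
    rw [exp_I_int_two_pi]
    simp


lemma two_pi_pos : (0:ℝ) < 2 * Real.pi := by positivity

lemma norm_one_div_two_pi : ‖(1 / (2 * (Real.pi : ℂ)))‖ = 1 / (2 * Real.pi) := by
  rw [norm_div, norm_one]
  congr 1
  have : (2 * (Real.pi : ℂ)) = ((2 * Real.pi : ℝ) : ℂ) := by push_cast; ring
  rw [this, Complex.norm_real, Real.norm_of_nonneg two_pi_pos.le]

lemma fCoef_norm_le (f : ℝ → ℂ) {M : ℝ}
    (hM : ∀ x ∈ Icc (0:ℝ) (2 * Real.pi), ‖f x‖ ≤ M) (n : ℤ) : ‖fCoef f n‖ ≤ M := by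
  have h1 : ‖∫ x in (0:ℝ)..(2 * Real.pi), Complex.exp (-Complex.I * n * x) * f x‖
      ≤ M * |2 * Real.pi - 0| := by
    apply intervalIntegral.norm_integral_le_of_norm_le_const
    intro x hx
    have hx' : x ∈ Icc (0:ℝ) (2 * Real.pi) := by
      rw [uIoc_of_le two_pi_pos.le] at hx; exact ⟨hx.1.le, hx.2⟩
    rw [norm_mul, norm_exp_neg_I_int, one_mul]
    exact hM x hx'
  have hM0 : 0 ≤ M := le_trans (norm_nonneg _) (hM 0 ⟨le_rfl, two_pi_pos.le⟩)
  unfold fCoef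
  rw [norm_mul, norm_one_div_two_pi]
  calc 1 / (2 * Real.pi) * ‖∫ x in (0:ℝ)..(2 * Real.pi), Complex.exp (-Complex.I * n * x) * f x‖
      ≤ 1 / (2 * Real.pi) * (M * |2 * Real.pi - 0|) := by
        apply mul_le_mul_of_nonneg_left h1; positivity
    _ = M := by
        rw [sub_zero, abs_of_nonneg two_pi_pos.le]
        field_simp

/-- Integration by parts for Fourier coefficients. -/
lemma fCoef_deriv (f f' : ℝ → ℂ) (hd : ∀ x, HasDerivAt f (f' x) x)
    (hc : Continuous f') (hper : f (2 * Real.pi) = f 0) (n : ℤ) :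
    fCoef f' n = Complex.I * n * fCoef f n := by
  have hf_cont : Continuous f := by
    have : Differentiable ℝ f := fun x => (hd x).differentiableAt
    exact this.continuous
  have hu : ∀ x ∈ uIcc (0:ℝ) (2 * Real.pi),
      HasDerivAt (fun y : ℝ => Complex.exp (-Complex.I * n * y))
        ((-Complex.I * n) * Complex.exp (-Complex.I * n * x)) x := by
    intro x _
    have := hasDerivAt_cexp_real (-Complex.I * n) x
    simpa [mul_assoc] using this
  have hv : ∀ x ∈ uIcc (0:ℝ) (2 * Real.pi), HasDerivAt f (f' x) x := fun x _ => hd x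
  have hu' : IntervalIntegrable (fun x : ℝ => (-Complex.I * n) * Complex.exp (-Complex.I * n * x))
      volume 0 (2 * Real.pi) := by
    apply Continuous.intervalIntegrable
    exact continuous_const.mul (Complex.continuous_exp.comp (continuous_const.mul Complex.continuous_ofReal))
  have hv' : IntervalIntegrable f' volume 0 (2 * Real.pi) := hc.intervalIntegrable _ _
  have key := intervalIntegral.integral_mul_deriv_eq_deriv_mul hu hv hu' hv'
  -- key : ∫ e^{-inx} f' = e^{-in 2π} f(2π) - e^0 f(0) - ∫ (-I n e^{-inx}) f
  have hexp : Complex.exp (-Complex.I * n * ((2 * Real.pi : ℝ) : ℂ)) = 1 := by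
    have : -Complex.I * n * ((2 * Real.pi : ℝ) : ℂ)
        = Complex.I * ((-n : ℤ) : ℂ) * ((2 * Real.pi : ℝ) : ℂ) := by push_cast; ring
    rw [this, exp_I_int_two_pi]
  have h3 : (∫ x in (0:ℝ)..(2*Real.pi), -Complex.I * n * Complex.exp (-Complex.I * n * x) * f x)
      = (-Complex.I * n) * ∫ x in (0:ℝ)..(2*Real.pi), Complex.exp (-Complex.I * n * x) * f x := by
    rw [← intervalIntegral.integral_const_mul]
    congr 1; ext x; ring
  unfold fCoef
  rw [key, hexp, hper, h3]
  simp only [Complex.ofReal_zero, mul_zero, Complex.exp_zero, one_mul]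
  ring

/-! ### coth and symbol estimates -/

lemma cothR_formula {x : ℝ} (hx : 0 < x) : cothR x = 1 + 2 / (Real.exp (2 * x) - 1) := by
  unfold cothR
  have he : Real.exp (2 * x) - 1 > 0 := by
    have : (1:ℝ) < Real.exp (2*x) := by
      rw [show (1:ℝ) = Real.exp 0 by simp]
      exact Real.exp_lt_exp.mpr (by linarith)
    linarith
  have hd : Real.exp x - Real.exp (-x) > 0 := by
    have : Real.exp (-x) < Real.exp x := Real.exp_lt_exp.mpr (by linarith)
    linarith
  have hex : Real.exp x > 0 := Real.exp_pos x
  have h2x : Real.exp (2*x) = Real.exp x * Real.exp x := by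
    rw [← Real.exp_add]; ring_nf
  have hxx : Real.exp x * Real.exp (-x) = 1 := by
    rw [← Real.exp_add]; simp
  rw [one_add_div he.ne', div_eq_div_iff hd.ne' he.ne']
  linear_combination (2*Real.exp (-x)) * h2x + (2*Real.exp x) * hxx

lemma cothR_pos {x : ℝ} (hx : 0 < x) : 0 < cothR x := by
  rw [cothR_formula hx]
  have : Real.exp (2 * x) - 1 > 0 := by
    have : (1:ℝ) < Real.exp (2*x) := by
      rw [show (1:ℝ) = Real.exp 0 by simp]
      exact Real.exp_lt_exp.mpr (by linarith)
    linarith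
  positivity

lemma cothR_antitone {a x : ℝ} (ha : 0 < a) (hax : a ≤ x) : cothR x ≤ cothR a := by
  rw [cothR_formula ha, cothR_formula (lt_of_lt_of_le ha hax)]
  have h1 : Real.exp (2 * a) - 1 > 0 := by
    have : (1:ℝ) < Real.exp (2*a) := by
      rw [show (1:ℝ) = Real.exp 0 by simp]
      exact Real.exp_lt_exp.mpr (by linarith)
    linarith
  have h2 : Real.exp (2 * a) ≤ Real.exp (2 * x) := Real.exp_le_exp.mpr (by linarith)
  have : 2 / (Real.exp (2 * x) - 1) ≤ 2 / (Real.exp (2 * a) - 1) := by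
    apply div_le_div_of_nonneg_left (by norm_num) h1 (by linarith)
  linarith

lemma cothR_odd (x : ℝ) : cothR (-x) = -cothR x := by
  unfold cothR
  rw [neg_neg]
  rw [show Real.exp (-x) - Real.exp x = -(Real.exp x - Real.exp (-x)) by ring]
  rw [show Real.exp (-x) + Real.exp x = Real.exp x + Real.exp (-x) by ring]
  rw [div_neg]

lemma abs_cothR_int_le {δ : ℝ} (hδ : 0 < δ) {n : ℤ} (hn : n ≠ 0) :
    |cothR (δ * n)| ≤ cothR δ := by
  have h1 : (1:ℝ) ≤ |(n:ℝ)| := by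
    have := Int.one_le_abs hn
    calc (1:ℝ) = ((1:ℤ):ℝ) := by norm_num
      _ ≤ ((|n|:ℤ):ℝ) := by exact_mod_cast this
      _ = |(n:ℝ)| := by push_cast; ring
  have key : ∀ m : ℤ, 0 < (m:ℝ) → |cothR (δ * m)| ≤ cothR δ := by
    intro m hm
    have hm1 : (1:ℝ) ≤ (m:ℝ) := by exact_mod_cast hm
    have hδm : δ ≤ δ * m := by nlinarith
    have hp := cothR_pos (lt_of_lt_of_le hδ hδm)
    rw [abs_of_pos hp]
    exact cothR_antitone hδ hδm
  rcases lt_trichotomy (n:ℝ) 0 with h | h | h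
  · have : δ * n = -(δ * (-n)) := by push_cast; ring
    rw [this, cothR_odd, abs_neg]
    have := key (-n) (by push_cast; linarith)
    convert this using 3
    push_cast; ring
  · exact absurd (by exact_mod_cast h) hn
  · exact key n h

lemma Gd1Sym_even (δ : ℝ) (n : ℤ) : Gd1Sym δ (-n) = Gd1Sym δ n := by
  unfold Gd1Sym
  rcases eq_or_ne n 0 with rfl | hn
  · simp
  · rw [if_neg (neg_ne_zero.mpr hn), if_neg hn]
    congr 1
    have : δ * ((-n : ℤ) : ℝ) = -(δ * n) := by push_cast; ring
    rw [this, cothR_odd]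
    push_cast; ring

lemma Gd1Sym_zero (δ : ℝ) : Gd1Sym δ 0 = 0 := by simp [Gd1Sym]

lemma GdSym_zero (δ : ℝ) : GdSym δ 0 = 0 := by simp [GdSym]

lemma GdSym_eq (δ : ℝ) (n : ℤ) : GdSym δ n = Complex.I * n * Gd1Sym δ n := by
  unfold GdSym Gd1Sym
  rcases eq_or_ne n 0 with rfl | hn
  · simp
  · rw [if_neg hn, if_neg hn]
    push_cast
    ring

lemma norm_Gd1Sym_le {δ : ℝ} (hδ : 0 < δ) (n : ℤ) :
    ‖Gd1Sym δ n‖ ≤ (cothR δ + 1/δ) * |(n:ℝ)| := by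
  rcases eq_or_ne n 0 with rfl | hn
  · simp [Gd1Sym_zero]
  · have h1 : (1:ℝ) ≤ |(n:ℝ)| := by
      have := Int.one_le_abs hn
      calc (1:ℝ) = ((1:ℤ):ℝ) := by norm_num
        _ ≤ ((|n|:ℤ):ℝ) := by exact_mod_cast this
        _ = |(n:ℝ)| := by push_cast; ring
    unfold Gd1Sym
    rw [if_neg hn, Complex.norm_real]
    have hcoth := abs_cothR_int_le hδ hn
    have hcp := cothR_pos hδ
    calc ‖(n:ℝ) * cothR (δ * n) - 1/δ‖
        ≤ |(n:ℝ) * cothR (δ * n)| + |1/δ| := by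
          rw [Real.norm_eq_abs]; exact abs_sub _ _
      _ = |(n:ℝ)| * |cothR (δ * n)| + 1/δ := by
          rw [abs_mul, abs_of_pos (one_div_pos.mpr hδ)]
      _ ≤ |(n:ℝ)| * cothR δ + (1/δ) * |(n:ℝ)| := by
          have := mul_le_mul_of_nonneg_left hcoth (abs_nonneg (n:ℝ))
          have h2' := mul_le_mul_of_nonneg_left h1 (le_of_lt (one_div_pos.mpr hδ))
          rw [mul_one] at h2'
          linarith
      _ = (cothR δ + 1/δ) * |(n:ℝ)| := by ring

lemma norm_GdSym_le {δ : ℝ} (hδ : 0 < δ) (n : ℤ) :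
    ‖GdSym δ n‖ ≤ (cothR δ + 1/δ) * |(n:ℝ)|^2 := by
  rw [GdSym_eq]
  rw [norm_mul, norm_mul, Complex.norm_I, one_mul]
  have h1 : ‖(n:ℂ)‖ = |(n:ℝ)| := by
    rw [show ((n:ℂ)) = (((n:ℝ)):ℂ) by push_cast; ring, Complex.norm_real, Real.norm_eq_abs]
  rw [h1]
  calc |(n:ℝ)| * ‖Gd1Sym δ n‖ ≤ |(n:ℝ)| * ((cothR δ + 1/δ) * |(n:ℝ)|) := by
        exact mul_le_mul_of_nonneg_left (norm_Gd1Sym_le hδ n) (abs_nonneg _)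
    _ = (cothR δ + 1/δ) * |(n:ℝ)|^2 := by ring


/-! ### Partial derivatives of smooth 2-variable functions -/

noncomputable def pd (G : ℝ × ℝ → ℝ) : ℝ × ℝ → ℝ := fun p => fderiv ℝ G p (0, 1)
noncomputable def pt (G : ℝ × ℝ → ℝ) : ℝ × ℝ → ℝ := fun p => fderiv ℝ G p (1, 0)

lemma contDiff_pd {G : ℝ × ℝ → ℝ} (hG : ContDiff ℝ (⊤ : ℕ∞) G) : ContDiff ℝ (⊤ : ℕ∞) (pd G) :=
  (hG.fderiv_right (by simp)).clm_apply contDiff_const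

lemma contDiff_pt {G : ℝ × ℝ → ℝ} (hG : ContDiff ℝ (⊤ : ℕ∞) G) : ContDiff ℝ (⊤ : ℕ∞) (pt G) :=
  (hG.fderiv_right (by simp)).clm_apply contDiff_const

lemma hasDerivAt_pd {G : ℝ × ℝ → ℝ} (hG : ContDiff ℝ (⊤ : ℕ∞) G) (t x : ℝ) :
    HasDerivAt (fun y => G (t, y)) (pd G (t, x)) x := by
  have h1 : HasFDerivAt G (fderiv ℝ G (t, x)) (t, x) :=
    (hG.differentiable (by simp) (t, x)).hasFDerivAt
  have h2 : HasDerivAt (fun y : ℝ => ((t, y) : ℝ × ℝ)) (((0 : ℝ), (1 : ℝ)) : ℝ × ℝ) x :=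
    (hasDerivAt_const x t).prodMk (hasDerivAt_id x)
  exact h1.comp_hasDerivAt x h2

lemma hasDerivAt_pt {G : ℝ × ℝ → ℝ} (hG : ContDiff ℝ (⊤ : ℕ∞) G) (t x : ℝ) :
    HasDerivAt (fun s => G (s, x)) (pt G (t, x)) t := by
  have h1 : HasFDerivAt G (fderiv ℝ G (t, x)) (t, x) :=
    (hG.differentiable (by simp) (t, x)).hasFDerivAt
  have h2 : HasDerivAt (fun s : ℝ => ((s, x) : ℝ × ℝ)) (((1 : ℝ), (0 : ℝ)) : ℝ × ℝ) t :=
    (hasDerivAt_id t).prodMk (hasDerivAt_const t x)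
  exact h1.comp_hasDerivAt t h2

lemma fderiv_periodic {G : ℝ × ℝ → ℝ} (hG : ContDiff ℝ (⊤ : ℕ∞) G)
    (hper : ∀ t x, G (t, x + 2 * Real.pi) = G (t, x)) (t x : ℝ) :
    fderiv ℝ G (t, x + 2 * Real.pi) = fderiv ℝ G (t, x) := by
  have hT : HasFDerivAt (fun p : ℝ × ℝ => p + (((0 : ℝ), (2 * Real.pi : ℝ)) : ℝ × ℝ))
      (ContinuousLinearMap.id ℝ (ℝ × ℝ)) (t, x) := (hasFDerivAt_id _).add_const _
  have h1 : HasFDerivAt G (fderiv ℝ G ((t, x) + ((0 : ℝ), (2 * Real.pi : ℝ))))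
      ((t, x) + ((0 : ℝ), (2 * Real.pi : ℝ))) :=
    (hG.differentiable (by simp) _).hasFDerivAt
  have h2 := h1.comp (t, x) hT
  have h3 : (fun p : ℝ × ℝ => G (p + ((0 : ℝ), (2 * Real.pi : ℝ)))) = G := by
    funext p
    have : p + (((0 : ℝ), (2 * Real.pi : ℝ)) : ℝ × ℝ) = (p.1, p.2 + 2 * Real.pi) := by
      ext <;> simp
    rw [this, hper p.1 p.2]
  rw [show (G ∘ fun p : ℝ × ℝ => p + (((0 : ℝ), (2 * Real.pi : ℝ)) : ℝ × ℝ)) = G from h3] at h2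
  have h4 := h2.fderiv
  have h5 : (t, x) + (((0 : ℝ), (2 * Real.pi : ℝ)) : ℝ × ℝ) = ((t : ℝ), x + 2 * Real.pi) := by
    ext <;> simp
  rw [h5] at h2
  have := h2.fderiv
  rw [ContinuousLinearMap.comp_id] at this
  exact this.symm

lemma pd_periodic {G : ℝ × ℝ → ℝ} (hG : ContDiff ℝ (⊤ : ℕ∞) G)
    (hper : ∀ t x, G (t, x + 2 * Real.pi) = G (t, x)) (t x : ℝ) :
    pd G (t, x + 2 * Real.pi) = pd G (t, x) := by
  unfold pd; rw [fderiv_periodic hG hper]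

lemma pt_periodic {G : ℝ × ℝ → ℝ} (hG : ContDiff ℝ (⊤ : ℕ∞) G)
    (hper : ∀ t x, G (t, x + 2 * Real.pi) = G (t, x)) (t x : ℝ) :
    pt G (t, x + 2 * Real.pi) = pt G (t, x) := by
  unfold pt; rw [fderiv_periodic hG hper]

/-- Iterated spatial partial derivative. -/
noncomputable def itpd (G : ℝ × ℝ → ℝ) : ℕ → ℝ × ℝ → ℝ
  | 0 => G
  | k + 1 => pd (itpd G k)

lemma contDiff_itpd {G : ℝ × ℝ → ℝ} (hG : ContDiff ℝ (⊤ : ℕ∞) G) (k : ℕ) :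
    ContDiff ℝ (⊤ : ℕ∞) (itpd G k) := by
  induction k with
  | zero => exact hG
  | succ k ih => exact contDiff_pd ih

lemma itpd_periodic {G : ℝ × ℝ → ℝ} (hG : ContDiff ℝ (⊤ : ℕ∞) G)
    (hper : ∀ t x, G (t, x + 2 * Real.pi) = G (t, x)) (k : ℕ) (t x : ℝ) :
    itpd G k (t, x + 2 * Real.pi) = itpd G k (t, x) := by
  induction k generalizing t x with
  | zero => exact hper t x
  | succ k ih => exact pd_periodic (contDiff_itpd hG k) (fun t x => ih t x) t x

lemma hasDerivAt_itpd {G : ℝ × ℝ → ℝ} (hG : ContDiff ℝ (⊤ : ℕ∞) G) (k : ℕ) (t x : ℝ) :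
    HasDerivAt (fun y => itpd G k (t, y)) (itpd G (k + 1) (t, x)) x :=
  hasDerivAt_pd (contDiff_itpd hG k) t x


lemma one_le_abs_intCast {n : ℤ} (hn : n ≠ 0) : (1:ℝ) ≤ |(n:ℝ)| := by
  have := Int.one_le_abs hn
  calc (1:ℝ) = ((1:ℤ):ℝ) := by norm_num
    _ ≤ ((|n|:ℤ):ℝ) := by exact_mod_cast this
    _ = |(n:ℝ)| := by push_cast; ring

lemma norm_intCast_complex (n : ℤ) : ‖(n:ℂ)‖ = |(n:ℝ)| := by
  rw [show ((n:ℂ)) = (((n:ℝ)):ℂ) by push_cast; ring, Complex.norm_real, Real.norm_eq_abs]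

/-- `k`-fold integration by parts: coefficients of the `k`-th spatial derivative. -/
lemma fCoef_itpd {G : ℝ × ℝ → ℝ} (hG : ContDiff ℝ (⊤ : ℕ∞) G)
    (hper : ∀ t x, G (t, x + 2 * Real.pi) = G (t, x)) (k : ℕ) (t : ℝ) (n : ℤ) :
    fCoef (fun y => (itpd G k (t, y) : ℂ)) n
      = (Complex.I * n) ^ k * fCoef (fun y => (G (t, y) : ℂ)) n := by
  induction k with
  | zero => simp [itpd]
  | succ k ih =>
    have hd : ∀ x, HasDerivAt (fun y => (itpd G k (t, y) : ℂ)) ((itpd G (k+1) (t, x) : ℝ) : ℂ) x :=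
      fun x => (hasDerivAt_itpd hG k t x).ofReal_comp
    have hc : Continuous (fun y => ((itpd G (k+1) (t, y) : ℝ) : ℂ)) := by
      exact Complex.continuous_ofReal.comp
        ((contDiff_itpd hG (k+1)).continuous.comp (Continuous.prodMk_right t))
    have hper' : ((itpd G k (t, 2 * Real.pi) : ℝ) : ℂ) = ((itpd G k (t, 0) : ℝ) : ℂ) := by
      have := itpd_periodic hG hper k t 0
      rw [zero_add] at this
      exact_mod_cast congrArg (fun r : ℝ => (r : ℂ)) this
    have := fCoef_deriv (fun y => (itpd G k (t, y) : ℂ))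
      (fun y => ((itpd G (k+1) (t, y) : ℝ) : ℂ)) hd hc hper' n
    rw [show (fun y => (itpd G (k+1) (t, y) : ℂ)) = (fun y => ((itpd G (k+1) (t, y) : ℝ) : ℂ)) from rfl]
    rw [this, ih]
    ring

/-- Decay of Fourier coefficients of smooth periodic functions. -/
lemma fCoef_decay {G : ℝ × ℝ → ℝ} (hG : ContDiff ℝ (⊤ : ℕ∞) G)
    (hper : ∀ t x, G (t, x + 2 * Real.pi) = G (t, x)) (k : ℕ) (t : ℝ) {M : ℝ}
    (hM : ∀ x ∈ Icc (0:ℝ) (2 * Real.pi), |itpd G k (t, x)| ≤ M) {n : ℤ} (hn : n ≠ 0) :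
    ‖fCoef (fun y => (G (t, y) : ℂ)) n‖ ≤ M / |(n:ℝ)| ^ k := by
  have h1 : ‖fCoef (fun y => (itpd G k (t, y) : ℂ)) n‖ ≤ M := by
    apply fCoef_norm_le
    intro x hx
    rw [Complex.norm_real, Real.norm_eq_abs]
    exact hM x hx
  rw [fCoef_itpd hG hper k t n, norm_mul, norm_pow, norm_mul, Complex.norm_I, one_mul,
    norm_intCast_complex] at h1
  have hpos : (0:ℝ) < |(n:ℝ)| ^ k :=
    pow_pos (lt_of_lt_of_le one_pos (one_le_abs_intCast hn)) k
  rw [le_div_iff₀ hpos]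
  linarith [h1]

/-! ### Summability helpers -/

lemma summable_int_inv_sq : Summable (fun n : ℤ => 1 / |(n:ℝ)| ^ 2) := by
  have := (Real.summable_one_div_int_pow (p := 2)).mpr one_lt_two
  apply this.congr
  intro n
  rw [sq_abs]

lemma summable_norm_of_sq_bound {g : ℤ → ℂ} {C : ℝ} (h0 : g 0 = 0)
    (h : ∀ n : ℤ, n ≠ 0 → ‖g n‖ ≤ C / |(n:ℝ)| ^ 2) : Summable fun n => ‖g n‖ := by
  have hb : Summable (fun n : ℤ => C * (1 / |(n:ℝ)| ^ 2)) := summable_int_inv_sq.mul_left C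
  apply Summable.of_nonneg_of_le (fun n => norm_nonneg _) _ hb
  intro n
  rcases eq_or_ne n 0 with rfl | hn
  · simp [h0]
  · rw [mul_one_div]
    exact h n hn

/-- Bounding a symbol-coefficient product: `‖θ n‖ ≤ K |n|^j`, `j ≤ 2`,
`‖d n‖ ≤ A/|n|^4` gives summability of norms. -/
lemma key_summable {θ d : ℤ → ℂ} {K A : ℝ} {j : ℕ} (hj : j ≤ 2) (hA : 0 ≤ A) (hK : 0 ≤ K)
    (hθ : ∀ n : ℤ, ‖θ n‖ ≤ K * |(n:ℝ)| ^ j) (hθ0 : θ 0 = 0)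
    (hd : ∀ n : ℤ, n ≠ 0 → ‖d n‖ ≤ A / |(n:ℝ)| ^ 4) :
    Summable fun n => ‖θ n * d n‖ := by
  have h0 : (fun n : ℤ => θ n * d n) 0 = 0 := by simp [hθ0]
  apply summable_norm_of_sq_bound h0
  intro n hn
  have h1 : (1:ℝ) ≤ |(n:ℝ)| := one_le_abs_intCast hn
  have hpos : (0:ℝ) < |(n:ℝ)| := lt_of_lt_of_le one_pos h1
  rw [norm_mul]
  calc ‖θ n‖ * ‖d n‖ ≤ (K * |(n:ℝ)| ^ j) * (A / |(n:ℝ)| ^ 4) := by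
        apply mul_le_mul (hθ n) (hd n hn) (norm_nonneg _)
        positivity
    _ = K * A * (|(n:ℝ)| ^ j / |(n:ℝ)| ^ 4) := by ring
    _ ≤ K * A * (1 / |(n:ℝ)| ^ 2) := by
        apply mul_le_mul_of_nonneg_left _ (by positivity)
        rw [div_le_div_iff₀ (by positivity) (by positivity)]
        calc |(n:ℝ)| ^ j * |(n:ℝ)| ^ 2 = |(n:ℝ)| ^ (j + 2) := by rw [pow_add]
          _ ≤ |(n:ℝ)| ^ 4 := pow_le_pow_right₀ h1 (by omega)
          _ = 1 * |(n:ℝ)| ^ 4 := (one_mul _).symm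
    _ = K * A / |(n:ℝ)| ^ 2 := by ring


lemma continuous_expI (n : ℤ) : Continuous (fun x : ℝ => Complex.exp (Complex.I * n * x)) := by
  have : (fun x : ℝ => Complex.exp (Complex.I * n * x))
      = fun x : ℝ => Complex.exp ((Complex.I * n) * (x:ℂ)) := by
    funext x; ring_nf
  rw [this]
  exact Complex.continuous_exp.comp (continuous_const.mul Complex.continuous_ofReal)

/-- Swap of integral and sum for uniformly (ℓ¹-) convergent Fourier-type series. -/
lemma integral_mul_tsum (h : ℝ → ℂ) (hh : Continuous h) (d : ℤ → ℂ)
    (hd : Summable fun n => ‖d n‖) :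
    (∫ x in (0:ℝ)..(2 * Real.pi), h x * ∑' n : ℤ, d n * Complex.exp (Complex.I * n * x))
      = ∑' n : ℤ, d n * ∫ x in (0:ℝ)..(2 * Real.pi), h x * Complex.exp (Complex.I * n * x) := by
  obtain ⟨M, hM⟩ := (isCompact_Icc (a := (0:ℝ)) (b := 2 * Real.pi)).exists_bound_of_continuousOn
    hh.continuousOn
  have hM0 : 0 ≤ M := le_trans (norm_nonneg _) (hM 0 ⟨le_rfl, two_pi_pos.le⟩)
  have hmeas : ∀ n : ℤ, AEStronglyMeasurable
      (fun x : ℝ => h x * (d n * Complex.exp (Complex.I * n * x)))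
      (volume.restrict (Set.Ioc (0:ℝ) (2 * Real.pi))) := fun n =>
    (hh.mul (continuous_const.mul (continuous_expI n))).aestronglyMeasurable
  have hfin : (∑' n : ℤ, ∫⁻ x, ‖h x * (d n * Complex.exp (Complex.I * n * x))‖₊
      ∂(volume.restrict (Set.Ioc (0:ℝ) (2 * Real.pi)))) ≠ ⊤ := by
    have hb : ∀ n : ℤ, (∫⁻ x, ‖h x * (d n * Complex.exp (Complex.I * n * x))‖₊
        ∂(volume.restrict (Set.Ioc (0:ℝ) (2 * Real.pi))))
        ≤ ENNReal.ofReal (‖d n‖ * (M * (2 * Real.pi))) := by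
      intro n
      have hle : ∀ᵐ x ∂(volume.restrict (Set.Ioc (0:ℝ) (2 * Real.pi))),
          (‖h x * (d n * Complex.exp (Complex.I * n * x))‖₊ : ℝ≥0∞)
            ≤ ENNReal.ofReal (‖d n‖ * M) := by
        rw [ae_restrict_iff' measurableSet_Ioc]
        filter_upwards with x hx
        have hx' : x ∈ Icc (0:ℝ) (2 * Real.pi) := ⟨hx.1.le, hx.2⟩
        have : ‖h x * (d n * Complex.exp (Complex.I * n * x))‖ ≤ ‖d n‖ * M := by
          rw [norm_mul, norm_mul, norm_exp_I_int, mul_one]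
          calc ‖h x‖ * ‖d n‖ ≤ M * ‖d n‖ :=
                mul_le_mul_of_nonneg_right (hM x hx') (norm_nonneg _)
            _ = ‖d n‖ * M := mul_comm _ _
        calc (‖h x * (d n * Complex.exp (Complex.I * n * x))‖₊ : ℝ≥0∞)
            = ENNReal.ofReal ‖h x * (d n * Complex.exp (Complex.I * n * x))‖ := by
              rw [ofReal_norm, enorm_eq_nnnorm]
          _ ≤ ENNReal.ofReal (‖d n‖ * M) := ENNReal.ofReal_le_ofReal this
      calc (∫⁻ x, ‖h x * (d n * Complex.exp (Complex.I * n * x))‖₊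
            ∂(volume.restrict (Set.Ioc (0:ℝ) (2 * Real.pi))))
          ≤ ∫⁻ _, ENNReal.ofReal (‖d n‖ * M)
            ∂(volume.restrict (Set.Ioc (0:ℝ) (2 * Real.pi))) := lintegral_mono_ae hle
        _ = ENNReal.ofReal (‖d n‖ * M) * volume (Set.Ioc (0:ℝ) (2 * Real.pi)) := by
            rw [lintegral_const, Measure.restrict_apply_univ]
        _ = ENNReal.ofReal (‖d n‖ * M) * ENNReal.ofReal (2 * Real.pi) := by
            rw [Real.volume_Ioc, sub_zero]
        _ = ENNReal.ofReal (‖d n‖ * (M * (2 * Real.pi))) := by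
            rw [← ENNReal.ofReal_mul (by positivity)]
            ring_nf
    have hsum : Summable (fun n : ℤ => ‖d n‖ * (M * (2 * Real.pi))) := hd.mul_right _
    have hle2 : (∑' n : ℤ, ∫⁻ x, ‖h x * (d n * Complex.exp (Complex.I * n * x))‖₊
          ∂(volume.restrict (Set.Ioc (0:ℝ) (2 * Real.pi))))
        ≤ ENNReal.ofReal (∑' n : ℤ, ‖d n‖ * (M * (2 * Real.pi))) := by
      rw [ENNReal.ofReal_tsum_of_nonneg (fun n => by positivity) hsum]
      exact ENNReal.tsum_le_tsum hb
    exact ne_top_of_le_ne_top ENNReal.ofReal_lt_top.ne hle2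
  have key := MeasureTheory.integral_tsum hmeas hfin
  rw [intervalIntegral.integral_of_le two_pi_pos.le]
  calc (∫ x in Set.Ioc (0:ℝ) (2 * Real.pi), h x * ∑' n : ℤ, d n * Complex.exp (Complex.I * n * x))
      = ∫ x in Set.Ioc (0:ℝ) (2 * Real.pi),
          ∑' n : ℤ, h x * (d n * Complex.exp (Complex.I * n * x)) := by
        apply MeasureTheory.integral_congr_ae
        filter_upwards with x
        rw [tsum_mul_left]
    _ = ∑' n : ℤ, ∫ x in Set.Ioc (0:ℝ) (2 * Real.pi),
          h x * (d n * Complex.exp (Complex.I * n * x)) := key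
    _ = ∑' n : ℤ, d n * ∫ x in (0:ℝ)..(2 * Real.pi),
          h x * Complex.exp (Complex.I * n * x) := by
        refine tsum_congr fun n => ?_
        rw [intervalIntegral.integral_of_le two_pi_pos.le]
        rw [← MeasureTheory.integral_const_mul]
        apply MeasureTheory.integral_congr_ae
        filter_upwards with x
        ring

/-- `∫_0^{2π} h(x) e^{inx} dx = 2π ĥ(-n)`. -/
lemma integral_mul_exp (h : ℝ → ℂ) (n : ℤ) :
    (∫ x in (0:ℝ)..(2 * Real.pi), h x * Complex.exp (Complex.I * n * x))
      = ((2 * Real.pi : ℝ) : ℂ) * fCoef h (-n) := by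
  unfold fCoef
  have : (∫ x in (0:ℝ)..(2 * Real.pi), Complex.exp (-Complex.I * (-n : ℤ) * x) * h x)
      = ∫ x in (0:ℝ)..(2 * Real.pi), h x * Complex.exp (Complex.I * n * x) := by
    apply intervalIntegral.integral_congr
    intro x _
    simp only [Int.cast_neg]
    ring_nf
  rw [this]
  have hpi : (2 * (Real.pi : ℂ)) ≠ 0 := by
    simp [Real.pi_ne_zero, Complex.ext_iff]
  rw [show ((2 * Real.pi : ℝ) : ℂ) = 2 * (Real.pi : ℂ) by push_cast; ring]
  field_simp


lemma continuous_expNegI (n : ℤ) :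
    Continuous (fun x : ℝ => Complex.exp (-Complex.I * n * x)) := by
  have : (fun x : ℝ => Complex.exp (-Complex.I * n * x))
      = fun x : ℝ => Complex.exp ((-Complex.I * n) * (x:ℂ)) := by
    funext x; ring_nf
  rw [this]
  exact Complex.continuous_exp.comp (continuous_const.mul Complex.continuous_ofReal)

/-! ### Series of exponentials -/

lemma tsum_exp_continuous (d : ℤ → ℂ) (hd : Summable fun n => ‖d n‖) :
    Continuous (fun x : ℝ => ∑' n : ℤ, d n * Complex.exp (Complex.I * n * x)) := by
  apply continuous_tsum (fun n => continuous_const.mul (continuous_expI n)) hd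
  intro n x
  simp only [Pi.mul_apply]
  rw [norm_mul, norm_exp_I_int, mul_one]

lemma tsum_exp_periodic (d : ℤ → ℂ) (x : ℝ) :
    (∑' n : ℤ, d n * Complex.exp (Complex.I * n * ((x + 2 * Real.pi : ℝ) : ℂ)))
      = ∑' n : ℤ, d n * Complex.exp (Complex.I * n * x) := by
  exact tsum_congr fun n => by rw [exp_I_int_periodic]

lemma summable_exp_of_norm (d : ℤ → ℂ) (hd : Summable fun n => ‖d n‖) (x : ℝ) :
    Summable (fun n : ℤ => d n * Complex.exp (Complex.I * n * x)) := by
  apply Summable.of_norm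
  apply hd.congr
  intro n
  rw [norm_mul, norm_exp_I_int, mul_one]

lemma tsum_exp_hasDerivAt (d : ℤ → ℂ)
    (hd : Summable fun n => ‖d n‖)
    (hd' : Summable fun n => ‖Complex.I * n * d n‖) (x : ℝ) :
    HasDerivAt (fun y : ℝ => ∑' n : ℤ, d n * Complex.exp (Complex.I * n * y))
      (∑' n : ℤ, Complex.I * n * d n * Complex.exp (Complex.I * n * x)) x := by
  apply hasDerivAt_tsum (u := fun n => ‖Complex.I * n * d n‖) hd'
    (g := fun (n : ℤ) (y : ℝ) => d n * Complex.exp (Complex.I * n * y))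
    (g' := fun (n : ℤ) (y : ℝ) => Complex.I * n * d n * Complex.exp (Complex.I * n * y))
    (y₀ := (0:ℝ))
  · intro n y
    have h1 := (hasDerivAt_cexp_real (Complex.I * n) y).const_mul (d n)
    have h2 : (fun y : ℝ => d n * Complex.exp (Complex.I * n * y))
        = fun y : ℝ => d n * Complex.exp ((Complex.I * n) * (y:ℂ)) := rfl
    refine h1.congr_deriv (Eq.symm ?_)
    ring
  · intro n y
    rw [norm_mul, norm_exp_I_int, mul_one]
  · exact summable_exp_of_norm d hd 0

/-! ### Pairing integral with a series -/


lemma sum_int_eq (h : ℝ → ℂ) (hh : Continuous h) (d : ℤ → ℂ)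
    (hd : Summable fun n => ‖d n‖) :
    (∫ x in (0:ℝ)..(2 * Real.pi), h x * ∑' n : ℤ, d n * Complex.exp (Complex.I * n * x))
      = ((2 * Real.pi : ℝ) : ℂ) * ∑' n : ℤ, d n * fCoef h (-n) := by
  rw [integral_mul_tsum h hh d hd]
  have : ∀ n : ℤ, d n * ∫ x in (0:ℝ)..(2 * Real.pi), h x * Complex.exp (Complex.I * n * x)
      = ((2 * Real.pi : ℝ) : ℂ) * (d n * fCoef h (-n)) := by
    intro n
    rw [integral_mul_exp h n]
    ring
  rw [tsum_congr this, tsum_mul_left]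

/-! ### Rectangle bounds -/

lemma rect_bound (G : ℝ × ℝ → ℝ) (hG : Continuous G) (t : ℝ) :
    ∃ A : ℝ, 0 ≤ A ∧ ∀ s ∈ Icc (t-1) (t+1), ∀ x ∈ Icc (0:ℝ) (2*Real.pi), |G (s,x)| ≤ A := by
  obtain ⟨C, hC⟩ := ((isCompact_Icc (a:=t-1) (b:=t+1)).prod
    (isCompact_Icc (a:=(0:ℝ)) (b:=2*Real.pi))).exists_bound_of_continuousOn hG.continuousOn
  refine ⟨max C 0, le_max_right _ _, fun s hs x hx => ?_⟩
  have := hC (s,x) (Set.mk_mem_prod hs hx)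
  rw [Real.norm_eq_abs] at this
  exact le_trans this (le_max_left _ _)

lemma slice_bound (G : ℝ × ℝ → ℝ) (hG : Continuous G) (t : ℝ) :
    ∃ A : ℝ, 0 ≤ A ∧ ∀ x ∈ Icc (0:ℝ) (2*Real.pi), |G (t,x)| ≤ A := by
  obtain ⟨A, hA0, hA⟩ := rect_bound G hG t
  exact ⟨A, hA0, fun x hx => hA t ⟨by linarith, by linarith⟩ x hx⟩

lemma mem_Icc_of_ball {t s : ℝ} (hs : s ∈ ball t 1) : s ∈ Icc (t-1) (t+1) := by
  rw [mem_ball, Real.dist_eq] at hs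
  have := abs_lt.mp hs
  exact ⟨by linarith [this.1], by linarith [this.2]⟩

lemma mem_Icc_of_uIoc {x : ℝ} (hx : x ∈ Set.uIoc (0:ℝ) (2*Real.pi)) : x ∈ Icc (0:ℝ) (2*Real.pi) := by
  rw [uIoc_of_le two_pi_pos.le] at hx
  exact ⟨hx.1.le, hx.2⟩

/-! ### t-derivative of Fourier coefficients -/

lemma hasDerivAt_fCoef (u : ℝ → ℝ → ℝ) (hu : ContDiff ℝ (⊤ : ℕ∞) (Function.uncurry u)) (n : ℤ) (t : ℝ) :
    HasDerivAt (fun s => fCoef (fun y => (u s y : ℂ)) n)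
      (fCoef (fun y => (pt (Function.uncurry u) (t, y) : ℂ)) n) t := by
  obtain ⟨B, hB0, hB⟩ := rect_bound (pt (Function.uncurry u)) (contDiff_pt hu).continuous t
  have hcont : ∀ s : ℝ, Continuous (fun x : ℝ => (u s x : ℂ)) := fun s =>
    Complex.continuous_ofReal.comp (hu.continuous.comp (Continuous.prodMk_right s))
  have hcont' : Continuous (fun x : ℝ => (pt (Function.uncurry u) (t, x) : ℂ)) :=
    Complex.continuous_ofReal.comp ((contDiff_pt hu).continuous.comp (Continuous.prodMk_right t))
  have key := (intervalIntegral.hasDerivAt_integral_of_dominated_loc_of_deriv_le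
    (F := fun s x => Complex.exp (-Complex.I * n * x) * (u s x : ℂ))
    (F' := fun s x => Complex.exp (-Complex.I * n * x) * (pt (Function.uncurry u) (s, x) : ℂ))
    (x₀ := t) (a := (0:ℝ)) (b := 2*Real.pi) (μ := volume) (bound := fun _ => B)
    (s := ball t 1) (ball_mem_nhds t one_pos) ?_ ?_ ?_ ?_ ?_ ?_).2
  · unfold fCoef
    exact key.const_mul _
  · filter_upwards with s
    exact ((continuous_expNegI n).mul (hcont s)).aestronglyMeasurable
  · exact ((Continuous.mul (by fun_prop) (hcont t)).intervalIntegrable _ _)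
  · exact ((Continuous.mul (by fun_prop) hcont').aestronglyMeasurable)
  · filter_upwards with x hx s hs
    rw [norm_mul, norm_exp_neg_I_int, one_mul, Complex.norm_real, Real.norm_eq_abs]
    exact hB s (mem_Icc_of_ball hs) x (mem_Icc_of_uIoc hx)
  · exact intervalIntegrable_const
  · filter_upwards with x hx s hs
    exact ((hasDerivAt_pt hu s x).ofReal_comp).const_mul _

/-! ### t-derivative of the cubic term -/

lemma hasDerivAt_cubic (u : ℝ → ℝ → ℝ) (hu : ContDiff ℝ (⊤ : ℕ∞) (Function.uncurry u)) (t : ℝ) :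
    HasDerivAt (fun s => ∫ x in (0:ℝ)..(2*Real.pi), (u s x : ℂ)^3)
      (∫ x in (0:ℝ)..(2*Real.pi), 3*(u t x:ℂ)^2*(pt (Function.uncurry u) (t,x):ℂ)) t := by
  obtain ⟨B, hB0, hB⟩ := rect_bound (pt (Function.uncurry u)) (contDiff_pt hu).continuous t
  obtain ⟨A, hA0, hA⟩ := rect_bound (Function.uncurry u) hu.continuous t
  have hcont : ∀ s : ℝ, Continuous (fun x : ℝ => (u s x : ℂ)) := fun s =>
    Complex.continuous_ofReal.comp (hu.continuous.comp (Continuous.prodMk_right s))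
  have hcont' : Continuous (fun x : ℝ => (pt (Function.uncurry u) (t, x) : ℂ)) :=
    Complex.continuous_ofReal.comp ((contDiff_pt hu).continuous.comp (Continuous.prodMk_right t))
  have key := (intervalIntegral.hasDerivAt_integral_of_dominated_loc_of_deriv_le
    (F := fun s x => (u s x : ℂ)^3)
    (F' := fun s x => 3*(u s x:ℂ)^2*(pt (Function.uncurry u) (s, x) : ℂ))
    (x₀ := t) (a := (0:ℝ)) (b := 2*Real.pi) (μ := volume) (bound := fun _ => 3*A^2*B)
    (s := ball t 1) (ball_mem_nhds t one_pos) ?_ ?_ ?_ ?_ ?_ ?_).2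
  · exact key
  · filter_upwards with s
    exact ((hcont s).pow 3).aestronglyMeasurable
  · exact (((hcont t).pow 3).intervalIntegrable _ _)
  · exact ((continuous_const.mul ((hcont t).pow 2)).mul hcont').aestronglyMeasurable
  · filter_upwards with x hx s hs
    have hx' := mem_Icc_of_uIoc hx
    have hs' := mem_Icc_of_ball hs
    rw [norm_mul, norm_mul, norm_pow, Complex.norm_real, Complex.norm_real]
    have h1 : ‖(3:ℂ)‖ = 3 := by norm_num
    rw [h1, Real.norm_eq_abs, Real.norm_eq_abs]
    have h2 : |u s x| ≤ A := hA s hs' x hx'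
    have h3 : |pt (Function.uncurry u) (s,x)| ≤ B := hB s hs' x hx'
    have h4 : |u s x|^2 ≤ A^2 := by
      apply pow_le_pow_left₀ (abs_nonneg _) h2
    nlinarith [abs_nonneg (u s x), abs_nonneg (pt (Function.uncurry u) (s,x)), sq_nonneg (|u s x|)]
  · exact intervalIntegrable_const
  · filter_upwards with x hx s hs
    have hR := (hasDerivAt_pt hu s x).ofReal_comp
    have h := hR.mul (hR.mul hR)
    have hfun : (fun s : ℝ => ((u s x : ℝ) : ℂ)^3)
        = fun s : ℝ => ((u s x:ℝ):ℂ) * (((u s x:ℝ):ℂ) * ((u s x:ℝ):ℂ)) := by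
      funext s; ring
    rw [hfun]
    refine h.congr_deriv (Eq.symm ?_)
    simp only [Function.uncurry_apply_pair, Pi.mul_apply]
    ring

noncomputable def cc (u : ℝ → ℝ → ℝ) (n : ℤ) (t : ℝ) : ℂ := fCoef (fun y => (u t y : ℂ)) n
noncomputable def ccT (u : ℝ → ℝ → ℝ) (n : ℤ) (t : ℝ) : ℂ :=
  fCoef (fun y => (pt (Function.uncurry u) (t, y) : ℂ)) n

section Main
variable {δ : ℝ} (u : ℝ → ℝ → ℝ)

/-- Uniform decay of `cc` on a time interval. -/
lemma cc_decay (hu : ContDiff ℝ (⊤ : ℕ∞) (Function.uncurry u))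
    (huper : ∀ t, Function.Periodic (u t) (2 * Real.pi)) (t₀ : ℝ) :
    ∃ A : ℝ, 0 ≤ A ∧ ∀ t ∈ Icc (t₀-1) (t₀+1), ∀ n : ℤ, n ≠ 0 →
      ‖cc u n t‖ ≤ A / |(n:ℝ)|^4 := by
  obtain ⟨A, hA0, hA⟩ := rect_bound (itpd (Function.uncurry u) 4)
    (contDiff_itpd hu 4).continuous t₀
  exact ⟨A, hA0, fun t ht n hn =>
    fCoef_decay hu (fun t x => huper t x) 4 t (fun x hx => hA t ht x hx) hn⟩

lemma ccT_decay (hu : ContDiff ℝ (⊤ : ℕ∞) (Function.uncurry u))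
    (huper : ∀ t, Function.Periodic (u t) (2 * Real.pi)) (t₀ : ℝ) :
    ∃ A : ℝ, 0 ≤ A ∧ ∀ t ∈ Icc (t₀-1) (t₀+1), ∀ n : ℤ, n ≠ 0 →
      ‖ccT u n t‖ ≤ A / |(n:ℝ)|^4 := by
  obtain ⟨A, hA0, hA⟩ := rect_bound (itpd (pt (Function.uncurry u)) 4)
    (contDiff_itpd (contDiff_pt hu) 4).continuous t₀
  exact ⟨A, hA0, fun t ht n hn =>
    fCoef_decay (contDiff_pt hu) (pt_periodic hu (fun t x => huper t x)) 4 t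
      (fun x hx => hA t ht x hx) hn⟩

lemma cc_bound (hu : ContDiff ℝ (⊤ : ℕ∞) (Function.uncurry u)) (t₀ : ℝ) :
    ∃ A : ℝ, 0 ≤ A ∧ ∀ t ∈ Icc (t₀-1) (t₀+1), ∀ n : ℤ, ‖cc u n t‖ ≤ A := by
  obtain ⟨A, hA0, hA⟩ := rect_bound (Function.uncurry u) hu.continuous t₀
  refine ⟨A, hA0, fun t ht n => fCoef_norm_le _ (fun x hx => ?_) n⟩
  rw [Complex.norm_real, Real.norm_eq_abs]
  exact hA t ht x hx

lemma ccT_bound (hu : ContDiff ℝ (⊤ : ℕ∞) (Function.uncurry u)) (t₀ : ℝ) :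
    ∃ A : ℝ, 0 ≤ A ∧ ∀ t ∈ Icc (t₀-1) (t₀+1), ∀ n : ℤ, ‖ccT u n t‖ ≤ A := by
  obtain ⟨A, hA0, hA⟩ := rect_bound (pt (Function.uncurry u)) (contDiff_pt hu).continuous t₀
  refine ⟨A, hA0, fun t ht n => fCoef_norm_le _ (fun x hx => ?_) n⟩
  rw [Complex.norm_real, Real.norm_eq_abs]
  exact hA t ht x hx

lemma mem_self_Icc (t : ℝ) : t ∈ Icc (t-1) (t+1) := ⟨by linarith, by linarith⟩

lemma summable_sym1 (hδ : 0 < δ) (hu : ContDiff ℝ (⊤ : ℕ∞) (Function.uncurry u))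
    (huper : ∀ t, Function.Periodic (u t) (2 * Real.pi)) (t : ℝ) :
    Summable fun n => ‖Gd1Sym δ n * cc u n t‖ := by
  obtain ⟨A, hA0, hA⟩ := cc_decay u hu huper t
  have hK0 : (0:ℝ) ≤ cothR δ + 1/δ := add_nonneg (cothR_pos hδ).le (by positivity)
  apply key_summable (j := 1) one_le_two hA0 hK0
  · intro n; rw [pow_one]; exact norm_Gd1Sym_le hδ n
  · exact Gd1Sym_zero δ
  · exact fun n hn => hA t (mem_self_Icc t) n hn

lemma summable_sym2 (hδ : 0 < δ) (hu : ContDiff ℝ (⊤ : ℕ∞) (Function.uncurry u))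
    (huper : ∀ t, Function.Periodic (u t) (2 * Real.pi)) (t : ℝ) :
    Summable fun n => ‖GdSym δ n * cc u n t‖ := by
  obtain ⟨A, hA0, hA⟩ := cc_decay u hu huper t
  have hK0 : (0:ℝ) ≤ cothR δ + 1/δ := add_nonneg (cothR_pos hδ).le (by positivity)
  apply key_summable (j := 2) le_rfl hA0 hK0
  · exact fun n => norm_GdSym_le hδ n
  · exact GdSym_zero δ
  · exact fun n hn => hA t (mem_self_Icc t) n hn

lemma summable_sym1T (hδ : 0 < δ) (hu : ContDiff ℝ (⊤ : ℕ∞) (Function.uncurry u))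
    (huper : ∀ t, Function.Periodic (u t) (2 * Real.pi)) (t : ℝ) :
    Summable fun n => ‖Gd1Sym δ n * ccT u n t‖ := by
  obtain ⟨A, hA0, hA⟩ := ccT_decay u hu huper t
  have hK0 : (0:ℝ) ≤ cothR δ + 1/δ := add_nonneg (cothR_pos hδ).le (by positivity)
  apply key_summable (j := 1) one_le_two hA0 hK0
  · intro n; rw [pow_one]; exact norm_Gd1Sym_le hδ n
  · exact Gd1Sym_zero δ
  · exact fun n hn => hA t (mem_self_Icc t) n hn

/-- Pairing formula: integrating a continuous function against `mulOp (Gd1Sym δ) u(t)`. -/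
lemma pairing (hδ : 0 < δ) (hu : ContDiff ℝ (⊤ : ℕ∞) (Function.uncurry u))
    (huper : ∀ t, Function.Periodic (u t) (2 * Real.pi)) (t : ℝ)
    (h : ℝ → ℂ) (hh : Continuous h) :
    (∫ x in (0:ℝ)..(2*Real.pi), h x * mulOp (Gd1Sym δ) (fun y => (u t y : ℂ)) x)
      = ((2*Real.pi:ℝ):ℂ) * ∑' n : ℤ, Gd1Sym δ n * cc u n t * fCoef h (-n) :=
  sum_int_eq h hh (fun n => Gd1Sym δ n * cc u n t) (summable_sym1 u hδ hu huper t)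


lemma abs_neg_intCast (n : ℤ) : |(((-n) : ℤ) : ℝ)| = |(n:ℝ)| := by push_cast; rw [abs_neg]

lemma cube_div_le {n : ℤ} (hn : n ≠ 0) : |(n:ℝ)| / |(n:ℝ)|^4 ≤ 1 / |(n:ℝ)|^2 := by
  have h1 := one_le_abs_intCast hn
  have hpos : (0:ℝ) < |(n:ℝ)| := lt_of_lt_of_le one_pos h1
  rw [div_le_div_iff₀ (by positivity) (by positivity)]
  calc |(n:ℝ)| * |(n:ℝ)|^2 = |(n:ℝ)|^3 := by ring
    _ ≤ |(n:ℝ)|^4 := pow_le_pow_right₀ h1 (by norm_num)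
    _ = 1 * |(n:ℝ)|^4 := (one_mul _).symm

lemma quad_tsum_hasDerivAt (hδ : 0 < δ) (hu : ContDiff ℝ (⊤ : ℕ∞) (Function.uncurry u))
    (huper : ∀ t, Function.Periodic (u t) (2 * Real.pi)) (t₀ : ℝ) :
    HasDerivAt (fun t => ∑' n : ℤ, Gd1Sym δ n * cc u n t * cc u (-n) t)
      (∑' n : ℤ, (Gd1Sym δ n * ccT u n t₀ * cc u (-n) t₀
        + Gd1Sym δ n * cc u n t₀ * ccT u (-n) t₀)) t₀ := by
  obtain ⟨AT, hAT0, hAT⟩ := ccT_decay u hu huper t₀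
  obtain ⟨A0, hA00, hA0b⟩ := cc_bound u hu t₀
  have hK0 : (0:ℝ) ≤ cothR δ + 1/δ := add_nonneg (cothR_pos hδ).le (by positivity)
  set K := cothR δ + 1/δ with hKdef
  set C := 2*(K*AT*A0) with hCdef
  have hC0 : 0 ≤ C := by positivity
  apply hasDerivAt_tsum_of_isPreconnected
    (u := fun n : ℤ => C / |(n:ℝ)|^2)
    (g := fun (n : ℤ) (t : ℝ) => Gd1Sym δ n * cc u n t * cc u (-n) t)
    (g' := fun (n : ℤ) (t : ℝ) => Gd1Sym δ n * ccT u n t * cc u (-n) t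
        + Gd1Sym δ n * cc u n t * ccT u (-n) t)
    (y₀ := t₀)
  · -- summable bound
    have := summable_int_inv_sq.mul_left C
    apply this.congr
    intro n
    rw [mul_one_div]
  · exact isOpen_Ioo (a := t₀ - 1) (b := t₀ + 1)
  · exact (convex_Ioo _ _).isPreconnected
  · -- termwise derivative
    intro n y hy
    have h1 := (hasDerivAt_fCoef u hu n y).const_mul (Gd1Sym δ n)
    have h2 := hasDerivAt_fCoef u hu (-n) y
    exact h1.mul h2
  · -- bound on derivatives
    intro n y hy
    have hy' : y ∈ Icc (t₀-1) (t₀+1) := Ioo_subset_Icc_self hy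
    rcases eq_or_ne n 0 with rfl | hn
    · simp [Gd1Sym_zero]
    · have e1 := norm_Gd1Sym_le hδ n
      have e2 := hAT y hy' n hn
      have e3 := hA0b y hy' (-n)
      have e4 := hA0b y hy' n
      have e5 : ‖ccT u (-n) y‖ ≤ AT / |(n:ℝ)|^4 := by
        have := hAT y hy' (-n) (neg_ne_zero.mpr hn)
        rwa [abs_neg_intCast] at this
      have h1 := one_le_abs_intCast hn
      have hpos : (0:ℝ) < |(n:ℝ)| := lt_of_lt_of_le one_pos h1
      calc ‖Gd1Sym δ n * ccT u n y * cc u (-n) y + Gd1Sym δ n * cc u n y * ccT u (-n) y‖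
          ≤ ‖Gd1Sym δ n‖*‖ccT u n y‖*‖cc u (-n) y‖ + ‖Gd1Sym δ n‖*‖cc u n y‖*‖ccT u (-n) y‖ := by
            refine le_trans (norm_add_le _ _) ?_
            rw [norm_mul, norm_mul, norm_mul, norm_mul]
        _ ≤ (K*|(n:ℝ)|)*(AT/|(n:ℝ)|^4)*A0 + (K*|(n:ℝ)|)*A0*(AT/|(n:ℝ)|^4) := by
            gcongr <;> first
              | exact e1 | exact e2 | exact e3 | exact e4 | exact e5
              | positivity
        _ = C * (|(n:ℝ)| / |(n:ℝ)|^4) := by rw [hCdef]; ring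
        _ ≤ C * (1 / |(n:ℝ)|^2) := mul_le_mul_of_nonneg_left (cube_div_le hn) hC0
        _ = C / |(n:ℝ)|^2 := by rw [mul_one_div]
  · exact ⟨by linarith, by linarith⟩
  · -- summability at t₀
    apply Summable.of_norm
    have hs1 := summable_sym1 u hδ hu huper t₀
    apply Summable.of_nonneg_of_le (fun n => norm_nonneg _) _ (hs1.mul_right A0)
    intro n
    rw [norm_mul]
    exact mul_le_mul_of_nonneg_left (hA0b t₀ (mem_self_Icc t₀) (-n)) (norm_nonneg _)
  · exact ⟨by linarith, by linarith⟩


set_option maxHeartbeats 2000000 in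
lemma energy_hasDerivAt (hδ : 0 < δ) (hu : ContDiff ℝ (⊤ : ℕ∞) (Function.uncurry u))
    (huper : ∀ t, Function.Periodic (u t) (2 * Real.pi))
    (heq : ∀ t x : ℝ, (deriv (fun s => u s x) t : ℂ) =
      mulOp (GdSym δ) (fun y => (u t y : ℂ)) x + (deriv (fun y => (u t y) ^ 2) x : ℂ))
    (t₀ : ℝ) :
    HasDerivAt (fun t => ((1 / 2 : ℂ) * ∫ x in (0 : ℝ)..(2 * Real.pi),
          (u t x : ℂ) * mulOp (Gd1Sym δ) (fun y => (u t y : ℂ)) x) +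
        (1 / 3 : ℂ) * ∫ x in (0 : ℝ)..(2 * Real.pi), (u t x : ℂ) ^ 3) 0 t₀ := by
  -- continuity of slices
  have hcontu : ∀ t : ℝ, Continuous (fun x : ℝ => (u t x : ℂ)) := fun t =>
    Complex.continuous_ofReal.comp (hu.continuous.comp (Continuous.prodMk_right t))
  have hcontpt : Continuous (fun x : ℝ => (pt (Function.uncurry u) (t₀, x) : ℂ)) :=
    Complex.continuous_ofReal.comp ((contDiff_pt hu).continuous.comp (Continuous.prodMk_right t₀))
  have hcontpd : Continuous (fun x : ℝ => (pd (Function.uncurry u) (t₀, x) : ℂ)) :=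
    Complex.continuous_ofReal.comp ((contDiff_pd hu).continuous.comp (Continuous.prodMk_right t₀))
  -- summabilities at t₀
  have hsum1 := summable_sym1 u hδ hu huper t₀
  have hsum2 := summable_sym2 u hδ hu huper t₀
  have hsum1' : Summable fun n : ℤ =>
      ‖Complex.I * n * (Gd1Sym δ n * cc u n t₀)‖ := by
    apply hsum2.congr
    intro n
    rw [show GdSym δ n * cc u n t₀ = Complex.I * n * (Gd1Sym δ n * cc u n t₀) by
      rw [GdSym_eq]; ring]
  set v : ℝ → ℂ := mulOp (Gd1Sym δ) (fun y => (u t₀ y : ℂ)) with hvdef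
  set w : ℝ → ℂ := mulOp (GdSym δ) (fun y => (u t₀ y : ℂ)) with hwdef
  have hv_cont : Continuous v := tsum_exp_continuous (fun n => Gd1Sym δ n * cc u n t₀) hsum1
  have hw_cont : Continuous w := tsum_exp_continuous (fun n => GdSym δ n * cc u n t₀) hsum2
  have hv_deriv : ∀ x : ℝ, HasDerivAt v (w x) x := by
    intro x
    have h := tsum_exp_hasDerivAt (fun n => Gd1Sym δ n * cc u n t₀) hsum1 hsum1' x
    have heqw : (∑' n : ℤ, Complex.I * n * (Gd1Sym δ n * cc u n t₀)
        * Complex.exp (Complex.I * n * x))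
        = ∑' n : ℤ, GdSym δ n * cc u n t₀ * Complex.exp (Complex.I * n * x) := by
      refine tsum_congr fun n => ?_
      rw [GdSym_eq]; ring
    rw [heqw] at h
    exact h
  have hv_per : v (2 * Real.pi) = v 0 := by
    have h0 := tsum_exp_periodic (fun n => Gd1Sym δ n * cc u n t₀) 0
    rw [zero_add] at h0
    exact h0
  have hu_per : u t₀ (2 * Real.pi) = u t₀ 0 := by
    have := huper t₀ 0; rwa [zero_add] at this
  -- pointwise PDE at t₀
  have hux : ∀ x : ℝ, HasDerivAt (fun y : ℝ => ((u t₀ y : ℝ) : ℂ))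
      ((pd (Function.uncurry u) (t₀,x) : ℝ) : ℂ) x := fun x =>
    (hasDerivAt_pd hu t₀ x).ofReal_comp
  have hpoint : ∀ x : ℝ, ((pt (Function.uncurry u) (t₀, x) : ℝ) : ℂ)
      = w x + ((2 * u t₀ x * pd (Function.uncurry u) (t₀, x) : ℝ) : ℂ) := by
    intro x
    have e1 : deriv (fun s => ((u s x : ℝ) : ℂ)) t₀
        = ((pt (Function.uncurry u) (t₀, x) : ℝ) : ℂ) :=
      ((hasDerivAt_pt hu t₀ x).ofReal_comp).deriv
    have e2 : deriv (fun y => ((u t₀ y : ℝ) : ℂ) ^ 2) x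
        = ((2 * u t₀ x * pd (Function.uncurry u) (t₀, x) : ℝ) : ℂ) := by
      have h2 : HasDerivAt (fun y : ℝ => ((u t₀ y:ℝ):ℂ) * ((u t₀ y:ℝ):ℂ)) _ x := (hux x).mul (hux x)
      have hfun2 : (fun y : ℝ => ((u t₀ y:ℝ):ℂ) * ((u t₀ y:ℝ):ℂ))
          = (fun y : ℝ => ((u t₀ y:ℝ):ℂ)^2) := by
        funext y; ring
      rw [hfun2] at h2
      rw [h2.deriv]
      push_cast
      ring
    have h := heq t₀ x
    rw [e1, e2] at h
    exact h
  -- key integral formulas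
  have hquad : ∀ t : ℝ, (∫ x in (0:ℝ)..(2*Real.pi),
        (u t x : ℂ) * mulOp (Gd1Sym δ) (fun y => (u t y : ℂ)) x)
      = ((2*Real.pi:ℝ):ℂ) * ∑' n : ℤ, Gd1Sym δ n * cc u n t * cc u (-n) t := fun t =>
    pairing u hδ hu huper t _ (hcontu t)
  have hcross : (∫ x in (0:ℝ)..(2*Real.pi),
        ((pt (Function.uncurry u) (t₀,x) : ℝ):ℂ) * v x)
      = ((2*Real.pi:ℝ):ℂ) * ∑' n : ℤ, Gd1Sym δ n * cc u n t₀ * ccT u (-n) t₀ :=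
    pairing u hδ hu huper t₀ _ hcontpt
  -- derivative structure
  have hQ := quad_tsum_hasDerivAt u hδ hu huper t₀
  have hC := hasDerivAt_cubic u hu t₀
  have hfun : (fun t => ((1 / 2 : ℂ) * ∫ x in (0 : ℝ)..(2 * Real.pi),
          (u t x : ℂ) * mulOp (Gd1Sym δ) (fun y => (u t y : ℂ)) x) +
        (1 / 3 : ℂ) * ∫ x in (0 : ℝ)..(2 * Real.pi), (u t x : ℂ) ^ 3)
      = (fun t => (1 / 2 : ℂ) * (((2*Real.pi:ℝ):ℂ)
          * ∑' n : ℤ, Gd1Sym δ n * cc u n t * cc u (-n) t) +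
        (1 / 3 : ℂ) * ∫ x in (0 : ℝ)..(2 * Real.pi), (u t x : ℂ) ^ 3) := by
    funext t
    rw [hquad t]
  rw [hfun]
  have hD := ((hQ.const_mul (((2*Real.pi:ℝ):ℂ))).const_mul ((1/2:ℂ))).add
    (hC.const_mul ((1/3:ℂ)))
  refine hD.congr_deriv (Eq.symm ?_)
  -- now show the derivative value is 0, i.e. 0 = D
  obtain ⟨AT0, hAT00, hATb⟩ := ccT_bound u hu t₀
  obtain ⟨A0, hA00, hA0b⟩ := cc_bound u hu t₀
  have hs1T := summable_sym1T u hδ hu huper t₀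
  have hSa : Summable (fun n : ℤ => Gd1Sym δ n * ccT u n t₀ * cc u (-n) t₀) := by
    apply Summable.of_norm
    apply Summable.of_nonneg_of_le (fun n => norm_nonneg _) _ (hs1T.mul_right A0)
    intro n
    rw [norm_mul]
    exact mul_le_mul_of_nonneg_left (hA0b t₀ (mem_self_Icc t₀) (-n)) (norm_nonneg _)
  have hSb : Summable (fun n : ℤ => Gd1Sym δ n * cc u n t₀ * ccT u (-n) t₀) := by
    apply Summable.of_norm
    apply Summable.of_nonneg_of_le (fun n => norm_nonneg _) _ (hsum1.mul_right AT0)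
    intro n
    rw [norm_mul]
    exact mul_le_mul_of_nonneg_left (hATb t₀ (mem_self_Icc t₀) (-n)) (norm_nonneg _)
  have hsplit : (∑' n : ℤ, (Gd1Sym δ n * ccT u n t₀ * cc u (-n) t₀
      + Gd1Sym δ n * cc u n t₀ * ccT u (-n) t₀))
      = 2 * ∑' n : ℤ, Gd1Sym δ n * cc u n t₀ * ccT u (-n) t₀ := by
    rw [Summable.tsum_add hSa hSb]
    have hre : (∑' n : ℤ, Gd1Sym δ n * ccT u n t₀ * cc u (-n) t₀)
        = ∑' n : ℤ, Gd1Sym δ n * cc u n t₀ * ccT u (-n) t₀ := by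
      calc (∑' n : ℤ, Gd1Sym δ n * ccT u n t₀ * cc u (-n) t₀)
          = ∑' n : ℤ, (fun m : ℤ => Gd1Sym δ m * cc u m t₀ * ccT u (-m) t₀) ((Equiv.neg ℤ) n) := by
            refine tsum_congr fun n => ?_
            simp only [Equiv.neg_apply, neg_neg, Gd1Sym_even]
            ring
        _ = ∑' n : ℤ, Gd1Sym δ n * cc u n t₀ * ccT u (-n) t₀ :=
            (Equiv.neg ℤ).tsum_eq (fun m : ℤ => Gd1Sym δ m * cc u m t₀ * ccT u (-m) t₀)
    rw [hre]
    ring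
  have hint3 : (∫ x in (0:ℝ)..(2*Real.pi),
        3*(u t₀ x:ℂ)^2*(pt (Function.uncurry u) (t₀,x):ℂ))
      = 3 * ∫ x in (0:ℝ)..(2*Real.pi), (u t₀ x:ℂ)^2*(pt (Function.uncurry u) (t₀,x):ℂ) := by
    rw [← intervalIntegral.integral_const_mul]
    apply intervalIntegral.integral_congr
    intro x _
    ring
  -- the closed 1-form Φ and vanishing of ∫ Ψ
  set Ψ : ℝ → ℂ := fun x =>
    (1/2:ℂ) * (w x * v x + v x * w x)
      + (((pd (Function.uncurry u) (t₀,x):ℝ):ℂ) * ((u t₀ x:ℝ):ℂ)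
          + ((u t₀ x:ℝ):ℂ) * ((pd (Function.uncurry u) (t₀,x):ℝ):ℂ)) * v x
      + (((u t₀ x:ℝ):ℂ) * ((u t₀ x:ℝ):ℂ)) * w x
      + (1/2:ℂ) * ((((pd (Function.uncurry u) (t₀,x):ℝ):ℂ) * ((u t₀ x:ℝ):ℂ)
          + ((u t₀ x:ℝ):ℂ) * ((pd (Function.uncurry u) (t₀,x):ℝ):ℂ))
            * (((u t₀ x:ℝ):ℂ) * ((u t₀ x:ℝ):ℂ))
        + (((u t₀ x:ℝ):ℂ) * ((u t₀ x:ℝ):ℂ))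
            * (((pd (Function.uncurry u) (t₀,x):ℝ):ℂ) * ((u t₀ x:ℝ):ℂ)
              + ((u t₀ x:ℝ):ℂ) * ((pd (Function.uncurry u) (t₀,x):ℝ):ℂ))) with hΨdef
  have hΦ : ∀ x : ℝ, HasDerivAt (fun y =>
      (1/2:ℂ) * (v y * v y) + (((u t₀ y:ℝ):ℂ) * ((u t₀ y:ℝ):ℂ)) * v y
        + (1/2:ℂ) * ((((u t₀ y:ℝ):ℂ) * ((u t₀ y:ℝ):ℂ)) * (((u t₀ y:ℝ):ℂ) * ((u t₀ y:ℝ):ℂ))))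
      (Ψ x) x := by
    intro x
    have h := ((((hv_deriv x).mul (hv_deriv x)).const_mul ((1/2:ℂ))).add
      (((hux x).mul (hux x)).mul (hv_deriv x))).add
      ((((hux x).mul (hux x)).mul ((hux x).mul (hux x))).const_mul ((1/2:ℂ)))
    refine h.congr_deriv (Eq.symm ?_)
    rw [hΨdef]
    simp only [Pi.mul_apply]
    ring
  have hΨ_cont : Continuous Ψ := by
    rw [hΨdef]
    refine (((continuous_const.mul ((hw_cont.mul hv_cont).add (hv_cont.mul hw_cont))).add
      (((hcontpd.mul (hcontu t₀)).add ((hcontu t₀).mul hcontpd)).mul hv_cont)).add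
      (((hcontu t₀).mul (hcontu t₀)).mul hw_cont)).add
      (continuous_const.mul ((((hcontpd.mul (hcontu t₀)).add ((hcontu t₀).mul hcontpd)).mul
          ((hcontu t₀).mul (hcontu t₀))).add
        (((hcontu t₀).mul (hcontu t₀)).mul
          ((hcontpd.mul (hcontu t₀)).add ((hcontu t₀).mul hcontpd)))))
  have hint0 : (∫ x in (0:ℝ)..(2*Real.pi), Ψ x) = 0 := by
    rw [intervalIntegral.integral_eq_sub_of_hasDerivAt (fun x _ => hΦ x)
      (hΨ_cont.intervalIntegrable _ _)]
    rw [hv_per, hu_per]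
    ring
  have int1 : IntervalIntegrable (fun x => ((pt (Function.uncurry u) (t₀,x):ℝ):ℂ) * v x)
      volume 0 (2*Real.pi) := (hcontpt.mul hv_cont).intervalIntegrable _ _
  have int2 : IntervalIntegrable (fun x => (u t₀ x:ℂ)^2 * (pt (Function.uncurry u) (t₀,x):ℂ))
      volume 0 (2*Real.pi) := (((hcontu t₀).pow 2).mul hcontpt).intervalIntegrable _ _
  have hptwise : ∀ x : ℝ, ((pt (Function.uncurry u) (t₀,x):ℝ):ℂ) * v x
      + (u t₀ x:ℂ)^2 * (pt (Function.uncurry u) (t₀,x):ℂ) = Ψ x := by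
    intro x
    rw [hpoint x, hΨdef]
    push_cast
    ring
  rw [hsplit, hint3]
  calc (0:ℂ) = ∫ x in (0:ℝ)..(2*Real.pi), Ψ x := hint0.symm
    _ = ∫ x in (0:ℝ)..(2*Real.pi), (((pt (Function.uncurry u) (t₀,x):ℝ):ℂ) * v x
          + (u t₀ x:ℂ)^2 * (pt (Function.uncurry u) (t₀,x):ℂ)) := by
        apply intervalIntegral.integral_congr
        intro x _
        exact (hptwise x).symm
    _ = (∫ x in (0:ℝ)..(2*Real.pi), ((pt (Function.uncurry u) (t₀,x):ℝ):ℂ) * v x)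
          + ∫ x in (0:ℝ)..(2*Real.pi), (u t₀ x:ℂ)^2 * (pt (Function.uncurry u) (t₀,x):ℂ) :=
        intervalIntegral.integral_add int1 int2
    _ = ((2*Real.pi:ℝ):ℂ) * (∑' n : ℤ, Gd1Sym δ n * cc u n t₀ * ccT u (-n) t₀)
          + ∫ x in (0:ℝ)..(2*Real.pi), (u t₀ x:ℂ)^2 * (pt (Function.uncurry u) (t₀,x):ℂ) := by
        rw [hcross]
    _ = (1/2:ℂ) * (((2*Real.pi:ℝ):ℂ)
          * (2 * ∑' n : ℤ, Gd1Sym δ n * cc u n t₀ * ccT u (-n) t₀))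
        + (1/3:ℂ) * (3 * ∫ x in (0:ℝ)..(2*Real.pi),
            (u t₀ x:ℂ)^2*(pt (Function.uncurry u) (t₀,x):ℂ)) := by
        ring

end Main

end ILW

set_option maxHeartbeats 1000000 in
/-- If a smooth spatially `2π`-periodic `u : ℝ × 𝕋 → ℝ` solves the ILW equation
`∂ₜ u = G_δ ∂ₓ² u + ∂ₓ(u²)`, then the Hamiltonian
`E_δ(u(t)) = (1/2) ∫_𝕋 u (G_δ ∂ₓ u) dx + (1/3) ∫_𝕋 u³ dx` is conserved in time. -/
theorem stmt11 (δ : ℝ) (hδ : 0 < δ) (u : ℝ → ℝ → ℝ)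
    (hu : ContDiff ℝ (⊤ : ℕ∞) (Function.uncurry u))
    (huper : ∀ t, Function.Periodic (u t) (2 * Real.pi))
    (heq : ∀ t x : ℝ, (deriv (fun s => u s x) t : ℂ) =
      mulOp (GdSym δ) (fun y => (u t y : ℂ)) x + (deriv (fun y => (u t y) ^ 2) x : ℂ)) :
    ∀ t₁ t₂ : ℝ,
      ((1 / 2 : ℂ) * ∫ x in (0 : ℝ)..(2 * Real.pi),
          (u t₁ x : ℂ) * mulOp (Gd1Sym δ) (fun y => (u t₁ y : ℂ)) x) +
        (1 / 3 : ℂ) * ∫ x in (0 : ℝ)..(2 * Real.pi), (u t₁ x : ℂ) ^ 3 =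
      ((1 / 2 : ℂ) * ∫ x in (0 : ℝ)..(2 * Real.pi),
          (u t₂ x : ℂ) * mulOp (Gd1Sym δ) (fun y => (u t₂ y : ℂ)) x) +
        (1 / 3 : ℂ) * ∫ x in (0 : ℝ)..(2 * Real.pi), (u t₂ x : ℂ) ^ 3 := by
  intro t₁ t₂
  have hE : ∀ t₀ : ℝ, HasDerivAt (fun t => ((1 / 2 : ℂ) * ∫ x in (0 : ℝ)..(2 * Real.pi),
          (u t x : ℂ) * mulOp (Gd1Sym δ) (fun y => (u t y : ℂ)) x) +
        (1 / 3 : ℂ) * ∫ x in (0 : ℝ)..(2 * Real.pi), (u t x : ℂ) ^ 3) 0 t₀ :=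
    fun t₀ => ILW.energy_hasDerivAt u hδ hu huper heq t₀
  exact is_const_of_deriv_eq_zero (fun t => (hE t).differentiableAt)
    (fun t => (hE t).deriv) t₁ t₂
end
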